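/- arXiv:2311.06287 — 12 statements merged into one kernel-verified Lean document; each statement's English description precedes it below -/
import Mathlib

section
/- Let p be a real number, let Δ = √(p² + 4), τ = (p + Δ)/2 and σ = (p − Δ)/2, and let A, B be real numbers. Define W : ℤ → ℝ by W(j) = A·τ^j + B·σ^j, and define the complex-valued function w : ℝ → ℂ by w(x) = A·(τ : ℂ)^(x : ℂ) + B·(σ : ℂ)^(x : ℂ), where z^s denotes the principal-branch complex power. Then for every integer j, the derivative of w at j exists and its real part equals ((W(j+1) + W(j−1))/Δ)·ln τ. -/
/-! The two roots `τ > 0 > σ` of `X² - pX - 1` satisfy `τσ = -1` and `τ - σ = Δ`. Differentiating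
`w` termwise gives `A τ^j log τ + B σ^j Log σ`, and the principal logarithm has real part
`Re (Log σ) = log |σ| = -log τ`, so the real part of `w'(j)` is `(A τ^j - B σ^j) log τ`. On the other
hand `τ + τ⁻¹ = τ - σ = Δ` and `σ + σ⁻¹ = σ - τ = -Δ`, so `W (j+1) + W (j-1) = Δ (A τ^j - B σ^j)`. -/

lemma mul_add_sqrt_sub_sqrt_div_two (p : ℝ) :
    (p + √(p ^ 2 + 4)) / 2 * ((p - √(p ^ 2 + 4)) / 2) = -1 := by
  have h := Real.sq_sqrt (by positivity : (0 : ℝ) ≤ p ^ 2 + 4)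
  linear_combination -h / 4

lemma add_sqrt_div_two_pos (p : ℝ) : 0 < (p + √(p ^ 2 + 4)) / 2 := by
  have hlt : |p| < √(p ^ 2 + 4) := by
    rw [← Real.sqrt_sq_eq_abs]
    exact Real.sqrt_lt_sqrt (sq_nonneg p) (by linarith)
  linarith [neg_abs_le p]

lemma zpow_add_one_add_zpow_sub_one_of_mul_eq_neg_one {K : Type*} [Field K] {τ σ : K}
    (hτσ : τ * σ = -1) (j : ℤ) : τ ^ (j + 1) + τ ^ (j - 1) = (τ - σ) * τ ^ j := by
  have hτ : τ ≠ 0 := left_ne_zero_of_mul (hτσ ▸ neg_ne_zero.mpr one_ne_zero)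
  have hinv : τ⁻¹ = -σ := inv_eq_of_mul_eq_one_right (by linear_combination -hτσ)
  rw [zpow_add_one₀ hτ, zpow_sub_one₀ hτ, hinv]
  ring

lemma Real.log_eq_neg_log_of_mul_eq_neg_one {τ σ : ℝ} (hτσ : τ * σ = -1) :
    Real.log σ = -Real.log τ := by
  have hτ : τ ≠ 0 := left_ne_zero_of_mul (by rw [hτσ]; norm_num)
  have hσ : σ ≠ 0 := right_ne_zero_of_mul (by rw [hτσ]; norm_num)
  have h := Real.log_mul hτ hσ
  rw [hτσ, Real.log_neg_eq_log, Real.log_one] at h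
  linarith

lemma hasDerivAt_ofReal_cpow_intCast {b : ℝ} (hb : b ≠ 0) (j : ℤ) :
    HasDerivAt (fun x : ℝ => (b : ℂ) ^ (x : ℂ)) ((b ^ j : ℝ) * Complex.log b) j := by
  have h := (Complex.hasStrictDerivAt_const_cpow (Or.inl (Complex.ofReal_ne_zero.mpr hb))
    (y := ((j : ℝ) : ℂ))).hasDerivAt.comp_ofReal
  rwa [Complex.ofReal_intCast, Complex.cpow_intCast, ← Complex.ofReal_zpow] at h

lemma exists_hasDerivAt_re_binet_cpow {A B τ σ : ℝ} (hτ : 0 < τ) (hτσ : τ * σ = -1) (j : ℤ) :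
    ∃ d : ℂ, HasDerivAt (fun x : ℝ => (A : ℂ) * (τ : ℂ) ^ (x : ℂ) + (B : ℂ) * (σ : ℂ) ^ (x : ℂ))
      d j ∧ d.re = (A * τ ^ j - B * σ ^ j) * Real.log τ := by
  have hσ : σ ≠ 0 := right_ne_zero_of_mul (by rw [hτσ]; norm_num)
  refine ⟨_, ((hasDerivAt_ofReal_cpow_intCast hτ.ne' j).const_mul (A : ℂ)).add
    ((hasDerivAt_ofReal_cpow_intCast hσ j).const_mul (B : ℂ)), ?_⟩
  simp only [Complex.add_re, Complex.re_ofReal_mul, Complex.log_ofReal_re,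
    Real.log_eq_neg_log_of_mul_eq_neg_one hτσ]
  ring

/-- With `Δ = √(p²+4)`, `τ = (p+Δ)/2`, `σ = (p−Δ)/2`,
`W j = A·τ^j + B·σ^j` and `w x = A·τ^x + B·σ^x` (principal complex powers),
the derivative of `w` at any integer `j` exists and its real part is
`((W(j+1) + W(j−1))/Δ)·ln τ`. -/
theorem statement0 (p A B Δ τ σ : ℝ)
    (hΔ : Δ = Real.sqrt (p ^ 2 + 4))
    (hτ : τ = (p + Δ) / 2) (hσ : σ = (p - Δ) / 2)
    (W : ℤ → ℝ) (hW : ∀ j : ℤ, W j = A * τ ^ j + B * σ ^ j)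
    (w : ℝ → ℂ)
    (hw : ∀ x : ℝ, w x = (A : ℂ) * (τ : ℂ) ^ (x : ℂ) + (B : ℂ) * (σ : ℂ) ^ (x : ℂ))
    (j : ℤ) :
    ∃ d : ℂ, HasDerivAt w d (j : ℝ) ∧
      d.re = ((W (j + 1) + W (j - 1)) / Δ) * Real.log τ := by
  have hτσ : τ * σ = -1 := by rw [hτ, hσ, hΔ]; exact mul_add_sqrt_sub_sqrt_div_two p
  have hτpos : 0 < τ := by rw [hτ, hΔ]; exact add_sqrt_div_two_pos p
  have hΔeq : Δ = τ - σ := by rw [hτ, hσ]; ring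
  have hΔne : Δ ≠ 0 := by rw [hΔ]; exact (Real.sqrt_pos.mpr (by positivity)).ne'
  obtain ⟨d, hd, hre⟩ := exists_hasDerivAt_re_binet_cpow (A := A) (B := B) hτpos hτσ j
  refine ⟨d, funext hw ▸ hd, ?_⟩
  have hWsum : W (j + 1) + W (j - 1) = Δ * (A * τ ^ j - B * σ ^ j) := by
    have hτpow := zpow_add_one_add_zpow_sub_one_of_mul_eq_neg_one hτσ j
    have hσpow := zpow_add_one_add_zpow_sub_one_of_mul_eq_neg_one ((mul_comm _ _).trans hτσ) j
    rw [hW, hW, hΔeq]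
    linear_combination A * hτpow + B * hσpow
  rw [hre, hWsum, mul_div_cancel_left₀ _ hΔne]
end

section
/- Let n ≥ 1 be an integer, let k be an even integer, and let r be any integer. Then 2·∑_{j=0}^{n} j·C(n,j)·L(r + 2kj) = 5n·L(k)^{n−1}·F(r + nk)·F(k) + n·L(k)^n·L(r + nk), and 2·∑_{j=0}^{n} j·C(n,j)·F(r + 2kj) = n·L(k)^{n−1}·L(r + nk)·F(k) + n·L(k)^n·F(r + nk), where C(n,j) denotes the binomial coefficient. -/
/-!
For even `k`, shifting by `±k` acts on every Fibonacci-like sequence `g` through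
`g (a + k) + g (a - k) = L k * g a` and `g (a + k) - g (a - k) = F k * (g (a + 1) + g (a - 1))`:
writing `k = 2t`, both sides of each identity satisfy `x (t + 1) + x (t - 1) = 3 x t` in `t`
and agree at `t = 0, 1`. By Pascal's rule the first identity collapses
`∑ C(m, j) g (r + 2kj)` to `L k ^ m * g (r + mk)`, and `j C(n, j) = n C(n - 1, j - 1)` turns the
weighted sum into `n L k ^ (n - 1) g (r + nk + k)`. Adding the two identities evaluates
`2 g (a + k)`, and `F (a + 1) + F (a - 1) = L a`, `L (a + 1) + L (a - 1) = 5 F a` finish.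
-/

open Finset

/-- `d ≠ 0` lets the recurrence be run backwards, so two initial values determine a sequence
on all of `ℤ`. -/
theorem linearRecurrence_ext {R : Type*} [CommRing R] [NoZeroDivisors R] {c d : R} (hd : d ≠ 0)
    {u v : ℤ → R} (hu : ∀ t, u (t + 2) = c * u (t + 1) + d * u t)
    (hv : ∀ t, v (t + 2) = c * v (t + 1) + d * v t) (h0 : u 0 = v 0) (h1 : u 1 = v 1) :
    u = v := by
  suffices h : ∀ t : ℤ, u t - v t = 0 ∧ u (t + 1) - v (t + 1) = 0 from
    funext fun t => sub_eq_zero.mp (h t).1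
  intro t
  induction t using Int.induction_on with
  | zero => simp [h0, h1]
  | succ i ih =>
    refine ⟨ih.2, ?_⟩
    rw [add_assoc, one_add_one_eq_two, hu, hv]
    linear_combination c * ih.2 + d * ih.1
  | pred i ih =>
    refine ⟨?_, by simpa using ih.1⟩
    have h := hu (-i - 1)
    have h' := hv (-i - 1)
    rw [show -(i : ℤ) - 1 + 2 = -i + 1 by ring, show -(i : ℤ) - 1 + 1 = -i by ring] at h h'
    refine (mul_eq_zero.mp ?_).resolve_left hd
    linear_combination ih.2 - h + h' - c * ih.1

section BinomialSums

variable {R : Type*} [CommRing R] {g : ℤ → R} {c : R} {k : ℤ}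

theorem sum_choose_mul_comp_add_two_mul (hg : ∀ a, g (a + k) + g (a - k) = c * g a) (m : ℕ)
    (r : ℤ) :
    ∑ j ∈ range (m + 1), (m.choose j : R) * g (r + 2 * k * j) = c ^ m * g (r + m * k) := by
  induction m generalizing r with
  | zero => simp
  | succ m ih =>
    have shift (i : ℕ) : g (r + 2 * k * ↑(i + 1)) = g (r + 2 * k + 2 * k * i) := by
      push_cast; ring_nf
    have h := hg (r + ↑(m + 1) * k)
    rw [show r + ↑(m + 1) * k + k = r + 2 * k + m * k by push_cast; ring,
      show r + ↑(m + 1) * k - k = r + m * k by push_cast; ring] at h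
    rw [sum_choose_succ_mul (fun i _ => g (r + 2 * k * i))]
    simp only [shift, ih, pow_succ]
    linear_combination c ^ m * h

theorem sum_mul_choose_mul_comp_add_two_mul (hg : ∀ a, g (a + k) + g (a - k) = c * g a) (n : ℕ)
    (r : ℤ) : ∑ j ∈ range (n + 1), (j : R) * n.choose j * g (r + 2 * k * j) =
      n * c ^ (n - 1) * g (r + n * k + k) := by
  obtain _ | m := n
  · simp
  have absorb (i : ℕ) :
      ((i + 1 : ℕ) : R) * ((m + 1).choose (i + 1) : ℕ) =
        (m + 1 : ℕ) * (m.choose i : ℕ) := by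
    rw [mul_comm, ← Nat.cast_mul, ← Nat.cast_mul, Nat.add_one_mul_choose_eq]
  have shift (i : ℕ) : g (r + 2 * k * ↑(i + 1)) = g (r + 2 * k + 2 * k * i) := by
    push_cast; ring_nf
  rw [sum_range_succ', Nat.cast_zero, zero_mul, zero_mul, add_zero,
    sum_congr rfl fun i _ => by rw [absorb, shift, mul_assoc], ← mul_sum,
    sum_choose_mul_comp_add_two_mul hg, Nat.add_sub_cancel,
    show r + 2 * k + m * k = r + ↑(m + 1) * k + k by push_cast; ring, mul_assoc]

end BinomialSums

def IsFibonacciLike (g : ℤ → ℤ) : Prop :=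
  ∀ n, g (n + 2) = g (n + 1) + g n

namespace IsFibonacciLike

variable {g : ℤ → ℤ}

theorem of_sub (hg : ∀ n : ℤ, g n = g (n - 1) + g (n - 2)) : IsFibonacciLike g := fun n => by
  simpa [add_sub_assoc] using hg (n + 2)

theorem ext {h : ℤ → ℤ} (hg : IsFibonacciLike g) (hh : IsFibonacciLike h) (h0 : g 0 = h 0)
    (h1 : g 1 = h 1) : g = h :=
  linearRecurrence_ext one_ne_zero (c := 1) (fun t => by simp [hg t]) (fun t => by simp [hh t])
    h0 h1

theorem comp_add (hg : IsFibonacciLike g) (c : ℤ) : IsFibonacciLike fun n => g (n + c) :=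
  fun n => by simpa only [add_right_comm] using hg (n + c)

theorem comp_sub (hg : IsFibonacciLike g) (c : ℤ) : IsFibonacciLike fun n => g (n - c) :=
  fun n => by simpa only [sub_add_eq_add_sub] using hg (n - c)

theorem add {h : ℤ → ℤ} (hg : IsFibonacciLike g) (hh : IsFibonacciLike h) :
    IsFibonacciLike fun n => g n + h n :=
  fun n => by simp only [hg n, hh n]; ring

theorem const_mul (hg : IsFibonacciLike g) (c : ℤ) : IsFibonacciLike fun n => c * g n :=
  fun n => by simp only [hg n]; ring

theorem add_two_add_sub_two (hg : IsFibonacciLike g) (x : ℤ) :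
    g (x + 2) + g (x - 2) = 3 * g x := by
  have h := hg (x - 2)
  have h' := hg (x - 1)
  have h'' := hg x
  simp only [show x - 2 + 2 = x by ring, show x - 2 + 1 = x - 1 by ring,
    show x - 1 + 2 = x + 1 by ring, show x - 1 + 1 = x by ring] at h h'
  linear_combination h'' + h' - h

theorem add_two_mul_recurrence (hg : IsFibonacciLike g) (a t : ℤ) :
    g (a + 2 * (t + 2)) = 3 * g (a + 2 * (t + 1)) + -1 * g (a + 2 * t) := by
  have h := hg.add_two_add_sub_two (a + 2 * (t + 1))
  rw [show a + 2 * (t + 1) + 2 = a + 2 * (t + 2) by ring,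
    show a + 2 * (t + 1) - 2 = a + 2 * t by ring] at h
  linear_combination h

theorem sub_two_mul_recurrence (hg : IsFibonacciLike g) (a t : ℤ) :
    g (a - 2 * (t + 2)) = 3 * g (a - 2 * (t + 1)) + -1 * g (a - 2 * t) := by
  have h := hg.add_two_add_sub_two (a - 2 * (t + 1))
  rw [show a - 2 * (t + 1) + 2 = a - 2 * t by ring,
    show a - 2 * (t + 1) - 2 = a - 2 * (t + 2) by ring] at h
  linear_combination h

end IsFibonacciLike

section FibonacciLucas

variable {F L : ℤ → ℤ}

theorem fib_add_one_add_fib_sub_one (hF : IsFibonacciLike F) (hF0 : F 0 = 0) (hF1 : F 1 = 1)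
    (hL : IsFibonacciLike L) (hL0 : L 0 = 2) (hL1 : L 1 = 1) (a : ℤ) :
    F (a + 1) + F (a - 1) = L a := by
  have hFm1 : F (-1) = 1 := by have := hF (-1); norm_num at this; linarith
  have hF2 : F 2 = 1 := by simpa [hF0, hF1] using hF 0
  refine congrFun ((hF.comp_add 1).add (hF.comp_sub 1) |>.ext hL ?_ ?_) a
  · simp [hF1, hFm1, hL0]
  · simp [hF2, hF0, hL1]

theorem lucas_add_one_add_lucas_sub_one (hF : IsFibonacciLike F) (hF0 : F 0 = 0) (hF1 : F 1 = 1)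
    (hL : IsFibonacciLike L) (hL0 : L 0 = 2) (hL1 : L 1 = 1) (a : ℤ) :
    L (a + 1) + L (a - 1) = 5 * F a := by
  have hLm1 : L (-1) = -1 := by have := hL (-1); norm_num at this; linarith
  have hL2 : L 2 = 3 := by simpa [hL0, hL1] using hL 0
  refine congrFun ((hL.comp_add 1).add (hL.comp_sub 1) |>.ext (hF.const_mul 5) ?_ ?_) a
  · simp [hL1, hLm1, hF0]
  · simp [hL2, hL0, hF1]

theorem IsFibonacciLike.add_even_add_sub_even {g : ℤ → ℤ} (hg : IsFibonacciLike g)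
    (hL : IsFibonacciLike L) (hL0 : L 0 = 2) (hL1 : L 1 = 1) {k : ℤ} (hk : Even k) (a : ℤ) :
    g (a + k) + g (a - k) = L k * g a := by
  have hL2 : L 2 = 3 := by simpa [hL0, hL1] using hL 0
  obtain ⟨t, rfl⟩ := hk
  rw [← two_mul]
  refine congrFun (linearRecurrence_ext (c := 3) (d := -1) (by norm_num)
    (u := fun t => g (a + 2 * t) + g (a - 2 * t)) (v := fun t => L (2 * t) * g a)
    (fun t => ?_) (fun t => ?_) ?_ ?_) t
  · simp only [hg.add_two_mul_recurrence, hg.sub_two_mul_recurrence]; ring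
  · have h := hL.add_two_mul_recurrence 0 t
    simp only [zero_add] at h
    simp only [h]; ring
  · simp [hL0]; ring
  · simpa [hL2] using hg.add_two_add_sub_two a

theorem IsFibonacciLike.add_even_sub_sub_even {g : ℤ → ℤ} (hg : IsFibonacciLike g)
    (hF : IsFibonacciLike F) (hF0 : F 0 = 0) (hF1 : F 1 = 1) {k : ℤ} (hk : Even k) (a : ℤ) :
    g (a + k) - g (a - k) = F k * (g (a + 1) + g (a - 1)) := by
  have hF2 : F 2 = 1 := by simpa [hF0, hF1] using hF 0
  obtain ⟨t, rfl⟩ := hk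
  rw [← two_mul]
  refine congrFun (linearRecurrence_ext (c := 3) (d := -1) (by norm_num)
    (u := fun t => g (a + 2 * t) - g (a - 2 * t))
    (v := fun t => F (2 * t) * (g (a + 1) + g (a - 1)))
    (fun t => ?_) (fun t => ?_) ?_ ?_) t
  · simp only [hg.add_two_mul_recurrence, hg.sub_two_mul_recurrence]; ring
  · have h := hF.add_two_mul_recurrence 0 t
    simp only [zero_add] at h
    simp only [h]; ring
  · simp [hF0]
  · have h := hg (a - 2)
    simp only [show a - 2 + 2 = a by ring, show a - 2 + 1 = a - 1 by ring] at h
    simp only [hF2, mul_one, one_mul, hg a]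
    linear_combination h

theorem IsFibonacciLike.two_mul_add_even {g : ℤ → ℤ} (hg : IsFibonacciLike g)
    (hF : IsFibonacciLike F) (hF0 : F 0 = 0) (hF1 : F 1 = 1)
    (hL : IsFibonacciLike L) (hL0 : L 0 = 2) (hL1 : L 1 = 1) {k : ℤ} (hk : Even k) (a : ℤ) :
    2 * g (a + k) = L k * g a + F k * (g (a + 1) + g (a - 1)) := by
  linear_combination hg.add_even_add_sub_even hL hL0 hL1 hk a +
    hg.add_even_sub_sub_even hF hF0 hF1 hk a

end FibonacciLucas

theorem statement2_general (F L : ℤ → ℤ)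
    (hF0 : F 0 = 0) (hF1 : F 1 = 1) (hF : ∀ n : ℤ, F n = F (n - 1) + F (n - 2))
    (hL0 : L 0 = 2) (hL1 : L 1 = 1) (hL : ∀ n : ℤ, L n = L (n - 1) + L (n - 2))
    (n : ℕ) (k r : ℤ) (hk : Even k) :
    2 * ∑ j ∈ Finset.range (n + 1),
        (j : ℤ) * (n.choose j) * L (r + 2 * k * j) =
      5 * n * L k ^ (n - 1) * F (r + n * k) * F k + n * L k ^ n * L (r + n * k) ∧
    2 * ∑ j ∈ Finset.range (n + 1),
        (j : ℤ) * (n.choose j) * F (r + 2 * k * j) =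
      n * L k ^ (n - 1) * L (r + n * k) * F k + n * L k ^ n * F (r + n * k) := by
  have hF' := IsFibonacciLike.of_sub hF
  have hL' := IsFibonacciLike.of_sub hL
  have hLk : (n : ℤ) * L k ^ n = n * L k ^ (n - 1) * L k := by
    obtain _ | m := n
    · simp
    · rw [Nat.add_sub_cancel, pow_succ, mul_assoc]
  have lucas := hL'.two_mul_add_even hF' hF0 hF1 hL' hL0 hL1 hk (r + n * k)
  have fib := hF'.two_mul_add_even hF' hF0 hF1 hL' hL0 hL1 hk (r + n * k)
  rw [lucas_add_one_add_lucas_sub_one hF' hF0 hF1 hL' hL0 hL1] at lucas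
  rw [fib_add_one_add_fib_sub_one hF' hF0 hF1 hL' hL0 hL1] at fib
  constructor
  · rw [sum_mul_choose_mul_comp_add_two_mul (hL'.add_even_add_sub_even hL' hL0 hL1 hk)]
    linear_combination n * L k ^ (n - 1) * lucas - L (r + n * k) * hLk
  · rw [sum_mul_choose_mul_comp_add_two_mul (hF'.add_even_add_sub_even hL' hL0 hL1 hk)]
    linear_combination n * L k ^ (n - 1) * fib - F (r + n * k) * hLk

/-- identities of Long-type for Fibonacci and Lucas numbers
extended to all integers, with `n ≥ 1`, `k` even. -/
theorem statement2 (F L : ℤ → ℤ)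
    (hF0 : F 0 = 0) (hF1 : F 1 = 1) (hF : ∀ n : ℤ, F n = F (n - 1) + F (n - 2))
    (hL0 : L 0 = 2) (hL1 : L 1 = 1) (hL : ∀ n : ℤ, L n = L (n - 1) + L (n - 2))
    (n : ℕ) (hn : 1 ≤ n) (k r : ℤ) (hk : Even k) :
    2 * ∑ j ∈ Finset.range (n + 1),
        (j : ℤ) * (n.choose j) * L (r + 2 * k * j) =
      5 * n * L k ^ (n - 1) * F (r + n * k) * F k + n * L k ^ n * L (r + n * k) ∧
    2 * ∑ j ∈ Finset.range (n + 1),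
        (j : ℤ) * (n.choose j) * F (r + 2 * k * j) =
      n * L k ^ (n - 1) * L (r + n * k) * F k + n * L k ^ n * F (r + n * k) :=
  statement2_general F L hF0 hF1 hF hL0 hL1 hL n k r hk
end

section
/- Let n be a non-negative integer and let k and r be any integers. Then ∑_{j=0}^{4n+1} (−1)^{j−1}·C(4n+1, j)·F(j+k)³·G(j+r) = 25^n·(F(2n+k+1)³·G(2n+r+1) − F(2n+k)³·G(2n+r)), where C(m,j) denotes the binomial coefficient. -/
private noncomputable def Dsum (F : ℤ → ℤ) (G : ℤ → ℝ) (N : ℕ) (k r : ℤ) : ℝ :=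
  ∑ j ∈ Finset.range (N + 1),
    (-1 : ℝ) ^ N * (-1 : ℝ) ^ j * (N.choose j) * (F (j + k) : ℝ) ^ 3 * G (j + r)

/-- Abstract finite-difference / Pascal step. -/
private lemma fd_succ (c : ℕ → ℝ) (N : ℕ) :
    ∑ j ∈ Finset.range (N + 2),
        (-1 : ℝ) ^ (N + 1) * (-1 : ℝ) ^ j * (((N + 1).choose j : ℕ) : ℝ) * c j
      = (∑ j ∈ Finset.range (N + 1),
          (-1 : ℝ) ^ N * (-1 : ℝ) ^ j * ((N.choose j : ℕ) : ℝ) * c (j + 1))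
        - ∑ j ∈ Finset.range (N + 1),
          (-1 : ℝ) ^ N * (-1 : ℝ) ^ j * ((N.choose j : ℕ) : ℝ) * c j := by
  rw [Finset.sum_range_succ' _ (N + 1)]
  have h1 : ∀ j ∈ Finset.range (N + 1),
      (-1 : ℝ) ^ (N + 1) * (-1 : ℝ) ^ (j + 1) * (((N + 1).choose (j + 1) : ℕ) : ℝ) * c (j + 1)
        = (-1 : ℝ) ^ N * (-1 : ℝ) ^ j * ((N.choose j : ℕ) : ℝ) * c (j + 1)
          + (-1 : ℝ) ^ N * (-1 : ℝ) ^ j * ((N.choose (j + 1) : ℕ) : ℝ) * c (j + 1) := by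
    intro j _
    rw [Nat.choose_succ_succ]
    push_cast
    ring
  rw [Finset.sum_congr rfl h1, Finset.sum_add_distrib]
  have h2 : (∑ j ∈ Finset.range (N + 1),
        (-1 : ℝ) ^ N * (-1 : ℝ) ^ j * ((N.choose (j + 1) : ℕ) : ℝ) * c (j + 1))
      + (-1 : ℝ) ^ (N + 1) * (-1 : ℝ) ^ 0 * (((N + 1).choose 0 : ℕ) : ℝ) * c 0
      = - ∑ j ∈ Finset.range (N + 1),
          (-1 : ℝ) ^ N * (-1 : ℝ) ^ j * ((N.choose j : ℕ) : ℝ) * c j := by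
    rw [Finset.sum_range_succ, Finset.sum_range_succ' _ N]
    simp only [Nat.choose_succ_self, Nat.cast_zero, Nat.choose_zero_right, Nat.cast_one]
    rw [neg_add, ← Finset.sum_neg_distrib]
    have h3 : ∀ j ∈ Finset.range N,
        (-1 : ℝ) ^ N * (-1 : ℝ) ^ j * ((N.choose (j + 1) : ℕ) : ℝ) * c (j + 1)
          = -((-1 : ℝ) ^ N * (-1 : ℝ) ^ (j + 1) * ((N.choose (j + 1) : ℕ) : ℝ) * c (j + 1)) := by
      intro j _
      ring
    rw [Finset.sum_congr rfl h3]
    ring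
  rw [add_assoc, h2]
  ring

private lemma Dsum_succ (F : ℤ → ℤ) (G : ℤ → ℝ) (N : ℕ) (k r : ℤ) :
    Dsum F G (N + 1) k r = Dsum F G N (k + 1) (r + 1) - Dsum F G N k r := by
  unfold Dsum
  have := fd_succ (fun j => (F (j + k) : ℝ) ^ 3 * G (j + r)) N
  simp only [← mul_assoc] at this
  rw [this]
  congr 1
  apply Finset.sum_congr rfl
  intro j _
  push_cast
  ring_nf

/-- The key identity: (E-1)^5 = 25 E^2 (E-1) on products F^3·G. -/
private lemma L5 (F : ℤ → ℤ) (hF : ∀ n : ℤ, F n = F (n - 1) + F (n - 2))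
    (G : ℤ → ℝ) (hG : ∀ n : ℤ, G n = G (n - 1) + G (n - 2)) (a b : ℤ) :
    (F (a + 5) : ℝ) ^ 3 * G (b + 5) - 5 * (F (a + 4) : ℝ) ^ 3 * G (b + 4)
      + 10 * (F (a + 3) : ℝ) ^ 3 * G (b + 3) - 10 * (F (a + 2) : ℝ) ^ 3 * G (b + 2)
      + 5 * (F (a + 1) : ℝ) ^ 3 * G (b + 1) - (F a : ℝ) ^ 3 * G b
      = 25 * ((F (a + 3) : ℝ) ^ 3 * G (b + 3)) - 25 * ((F (a + 2) : ℝ) ^ 3 * G (b + 2)) := by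
  have f : ∀ m : ℤ, F (m + 2) = F (m + 1) + F m := by
    intro m
    have h := hF (m + 2)
    rw [show m + 2 - 1 = m + 1 from by ring, show m + 2 - 2 = m from by ring] at h
    exact h
  have g : ∀ m : ℤ, G (m + 2) = G (m + 1) + G m := by
    intro m
    have h := hG (m + 2)
    rw [show m + 2 - 1 = m + 1 from by ring, show m + 2 - 2 = m from by ring] at h
    exact h
  have f5 : F (a + 5) = F (a + 4) + F (a + 3) := by
    have h := f (a + 3)
    rw [show a + 3 + 2 = a + 5 from by ring, show a + 3 + 1 = a + 4 from by ring] at h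
    exact h
  have f4 : F (a + 4) = F (a + 3) + F (a + 2) := by
    have h := f (a + 2)
    rw [show a + 2 + 2 = a + 4 from by ring, show a + 2 + 1 = a + 3 from by ring] at h
    exact h
  have f3 : F (a + 3) = F (a + 2) + F (a + 1) := by
    have h := f (a + 1)
    rw [show a + 1 + 2 = a + 3 from by ring, show a + 1 + 1 = a + 2 from by ring] at h
    exact h
  have f2 : F (a + 2) = F (a + 1) + F a := f a
  have g5 : G (b + 5) = G (b + 4) + G (b + 3) := by
    have h := g (b + 3)
    rw [show b + 3 + 2 = b + 5 from by ring, show b + 3 + 1 = b + 4 from by ring] at h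
    exact h
  have g4 : G (b + 4) = G (b + 3) + G (b + 2) := by
    have h := g (b + 2)
    rw [show b + 2 + 2 = b + 4 from by ring, show b + 2 + 1 = b + 3 from by ring] at h
    exact h
  have g3 : G (b + 3) = G (b + 2) + G (b + 1) := by
    have h := g (b + 1)
    rw [show b + 1 + 2 = b + 3 from by ring, show b + 1 + 1 = b + 2 from by ring] at h
    exact h
  have g2 : G (b + 2) = G (b + 1) + G b := g b
  rw [f5, f4, f3, f2, g5, g4, g3, g2]
  push_cast
  ring

private lemma Dsum_main (F : ℤ → ℤ) (hF : ∀ n : ℤ, F n = F (n - 1) + F (n - 2))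
    (G : ℤ → ℝ) (hG : ∀ n : ℤ, G n = G (n - 1) + G (n - 2)) :
    ∀ (n : ℕ) (k r : ℤ), Dsum F G (4 * n + 1) k r
      = 25 ^ n * ((F (2 * (n : ℤ) + k + 1) : ℝ) ^ 3 * G (2 * (n : ℤ) + r + 1)
          - (F (2 * (n : ℤ) + k) : ℝ) ^ 3 * G (2 * (n : ℤ) + r)) := by
  intro n
  induction n with
  | zero =>
    intro k r
    unfold Dsum
    norm_num [Finset.sum_range_succ]
    ring_nf
  | succ n ih =>
    intro k r
    rw [show 4 * (n + 1) + 1 = (4 * n + 4) + 1 from by ring]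
    rw [Dsum_succ]
    rw [show 4 * n + 4 = (4 * n + 3) + 1 from by ring]
    rw [Dsum_succ F G (4 * n + 3) (k + 1) (r + 1), Dsum_succ F G (4 * n + 3) k r]
    rw [show 4 * n + 3 = (4 * n + 2) + 1 from by ring]
    rw [Dsum_succ F G (4 * n + 2) (k + 1 + 1) (r + 1 + 1),
        Dsum_succ F G (4 * n + 2) (k + 1) (r + 1),
        Dsum_succ F G (4 * n + 2) k r]
    rw [show 4 * n + 2 = (4 * n + 1) + 1 from by ring]
    rw [Dsum_succ F G (4 * n + 1) (k + 1 + 1 + 1) (r + 1 + 1 + 1),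
        Dsum_succ F G (4 * n + 1) (k + 1 + 1) (r + 1 + 1),
        Dsum_succ F G (4 * n + 1) (k + 1) (r + 1),
        Dsum_succ F G (4 * n + 1) k r]
    simp only [ih]
    have key := L5 F hF G hG (2 * (n : ℤ) + k) (2 * (n : ℤ) + r)
    push_cast
    ring_nf
    ring_nf at key
    linear_combination (25:ℝ)^n * key

/-- generalization of Hoggatt–Bicknell's identity with one
gibonacci factor. -/
theorem statement3 (F : ℤ → ℤ)
    (hF0 : F 0 = 0) (hF1 : F 1 = 1) (hF : ∀ n : ℤ, F n = F (n - 1) + F (n - 2))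
    (G : ℤ → ℝ) (hG : ∀ n : ℤ, G n = G (n - 1) + G (n - 2))
    (n : ℕ) (k r : ℤ) :
    ∑ j ∈ Finset.range (4 * n + 2),
        (-1 : ℝ) ^ ((j : ℤ) - 1) * ((4 * n + 1).choose j) * (F (j + k) : ℝ) ^ 3 * G (j + r) =
      25 ^ n * ((F (2 * n + k + 1) : ℝ) ^ 3 * G (2 * n + r + 1)
        - (F (2 * n + k) : ℝ) ^ 3 * G (2 * n + r)) := by
  have hsum : ∑ j ∈ Finset.range (4 * n + 2),
      (-1 : ℝ) ^ ((j : ℤ) - 1) * ((4 * n + 1).choose j) * (F (j + k) : ℝ) ^ 3 * G (j + r)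
      = Dsum F G (4 * n + 1) k r := by
    unfold Dsum
    apply Finset.sum_congr rfl
    intro j _
    have h1 : (-1 : ℝ) ^ ((j : ℤ) - 1) = -(-1 : ℝ) ^ j := by
      rw [zpow_sub₀ (by norm_num : (-1 : ℝ) ≠ 0), zpow_natCast, zpow_one]
      rw [div_neg, div_one]
    have h2 : (-1 : ℝ) ^ (4 * n + 1) = -1 := Odd.neg_one_pow ⟨2 * n, by ring⟩
    rw [h1, h2]
    ring
  rw [hsum, Dsum_main F hF G hG n k r]
end

section
/- Let n be a non-negative integer and let k, r, s, t be any integers. Then ∑_{j=0}^{4n+1} (−1)^{j−1}·C(4n+1, j)·E(j+k)·G(j+r)·H(j+s)·I(j+t) = 25^n·(E(2n+k+1)·G(2n+r+1)·H(2n+s+1)·I(2n+t+1) − E(2n+k)·G(2n+r)·H(2n+s)·I(2n+t)), where C(m,j) denotes the binomial coefficient. -/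
open Finset

private def Ssum (Q : ℤ → ℝ) (m : ℤ) (N : ℕ) : ℝ :=
  ∑ j ∈ range (N + 1), (-(-1 : ℝ) ^ j) * ((N.choose j : ℝ)) * Q (m + j)

private lemma Ssum_succ (Q : ℤ → ℝ) (m : ℤ) (N : ℕ) :
    Ssum Q m (N + 1) = Ssum Q m N - Ssum Q (m + 1) N := by
  have h1 : Ssum Q m N = ∑ j ∈ range (N + 2), (-(-1 : ℝ) ^ j) * ((N.choose j : ℝ)) * Q (m + j) := by
    rw [Ssum, Finset.sum_range_succ (n := N + 1)]
    simp [Nat.choose_succ_self]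
  have h2 : Ssum Q m (N + 1) - Ssum Q m N = - Ssum Q (m + 1) N := by
    rw [h1, Ssum, ← Finset.sum_sub_distrib, Finset.sum_range_succ']
    have h0 : (-(-1 : ℝ) ^ 0) * (((N+1).choose 0 : ℝ)) * Q (m + (0:ℕ)) -
        (-(-1 : ℝ) ^ 0) * ((N.choose 0 : ℝ)) * Q (m + (0:ℕ)) = 0 := by
      simp
    rw [h0, add_zero, Ssum, ← Finset.sum_neg_distrib]
    apply Finset.sum_congr rfl
    intro i _
    have : ((N + 1).choose (i + 1) : ℝ) = (N.choose i : ℝ) + (N.choose (i + 1) : ℝ) := by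
      rw [Nat.choose_succ_succ]; push_cast; ring
    rw [this]
    have : (m + 1 + (i : ℤ)) = m + ((i : ℕ) + 1 : ℕ) := by push_cast; ring
    rw [this]
    ring
  linarith

private lemma Ssum_formula (Q : ℤ → ℝ)
    (hQ : ∀ m : ℤ, Q (m + 5) = 5 * Q (m + 4) + 15 * Q (m + 3) - 15 * Q (m + 2)
      - 5 * Q (m + 1) + Q m)
    (n : ℕ) :
    ∀ m : ℤ, Ssum Q m (4 * n + 1) = 25 ^ n * (Q (m + 2 * n + 1) - Q (m + 2 * n)) := by
  induction n with
  | zero =>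
    intro m
    norm_num [Ssum, Finset.sum_range_succ]
    ring
  | succ n ih =>
    intro m
    have h5 : 4 * (n + 1) + 1 = (4 * n + 1) + 1 + 1 + 1 + 1 := by ring
    rw [h5]
    generalize hM : 4 * n + 1 = M at ih ⊢
    simp only [Ssum_succ]
    simp only [ih]
    have hq := hQ (m + 2 * n)
    push_cast
    rw [pow_succ]
    ring_nf at hq ⊢
    linear_combination (25 : ℝ) ^ n * hq

private lemma gib_step (E : ℤ → ℝ) (hE : ∀ n : ℤ, E n = E (n - 1) + E (n - 2)) :
    (∀ x : ℤ, E (x + 2) = E x + E (x + 1)) ∧ (∀ x : ℤ, E (x + 3) = E x + 2 * E (x + 1)) ∧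
    (∀ x : ℤ, E (x + 4) = 2 * E x + 3 * E (x + 1)) ∧
    (∀ x : ℤ, E (x + 5) = 3 * E x + 5 * E (x + 1)) := by
  have h2 : ∀ x : ℤ, E (x + 2) = E x + E (x + 1) := by
    intro x
    have h := hE (x + 2)
    rw [show x + 2 - 1 = x + 1 by ring, show x + 2 - 2 = x by ring] at h
    linarith
  have h3 : ∀ x : ℤ, E (x + 3) = E x + 2 * E (x + 1) := by
    intro x
    have ha := h2 (x + 1)
    rw [show x + 1 + 2 = x + 3 by ring, show x + 1 + 1 = x + 2 by ring] at ha
    have hb := h2 x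
    linarith
  have h4 : ∀ x : ℤ, E (x + 4) = 2 * E x + 3 * E (x + 1) := by
    intro x
    have ha := h3 (x + 1)
    rw [show x + 1 + 3 = x + 4 by ring, show x + 1 + 1 = x + 2 by ring] at ha
    have hb := h2 x
    linarith
  have h5 : ∀ x : ℤ, E (x + 5) = 3 * E x + 5 * E (x + 1) := by
    intro x
    have ha := h4 (x + 1)
    rw [show x + 1 + 4 = x + 5 by ring, show x + 1 + 1 = x + 2 by ring] at ha
    have hb := h2 x
    linarith
  exact ⟨h2, h3, h4, h5⟩

private lemma prod_rec (E G H I : ℤ → ℝ)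
    (hE : ∀ n : ℤ, E n = E (n - 1) + E (n - 2))
    (hG : ∀ n : ℤ, G n = G (n - 1) + G (n - 2))
    (hH : ∀ n : ℤ, H n = H (n - 1) + H (n - 2))
    (hI : ∀ n : ℤ, I n = I (n - 1) + I (n - 2))
    (k r s t : ℤ) (m : ℤ) :
    E (m + 5 + k) * G (m + 5 + r) * H (m + 5 + s) * I (m + 5 + t) =
      5 * (E (m + 4 + k) * G (m + 4 + r) * H (m + 4 + s) * I (m + 4 + t)) +
      15 * (E (m + 3 + k) * G (m + 3 + r) * H (m + 3 + s) * I (m + 3 + t)) -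
      15 * (E (m + 2 + k) * G (m + 2 + r) * H (m + 2 + s) * I (m + 2 + t)) -
      5 * (E (m + 1 + k) * G (m + 1 + r) * H (m + 1 + s) * I (m + 1 + t)) +
      E (m + k) * G (m + r) * H (m + s) * I (m + t) := by
  obtain ⟨e2, e3, e4, e5⟩ := gib_step E hE
  obtain ⟨g2, g3, g4, g5⟩ := gib_step G hG
  obtain ⟨h2, h3, h4, h5⟩ := gib_step H hH
  obtain ⟨i2, i3, i4, i5⟩ := gib_step I hI
  rw [show m + 5 + k = m + k + 5 by ring, show m + 4 + k = m + k + 4 by ring,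
      show m + 3 + k = m + k + 3 by ring, show m + 2 + k = m + k + 2 by ring,
      show m + 1 + k = m + k + 1 by ring,
      show m + 5 + r = m + r + 5 by ring, show m + 4 + r = m + r + 4 by ring,
      show m + 3 + r = m + r + 3 by ring, show m + 2 + r = m + r + 2 by ring,
      show m + 1 + r = m + r + 1 by ring,
      show m + 5 + s = m + s + 5 by ring, show m + 4 + s = m + s + 4 by ring,
      show m + 3 + s = m + s + 3 by ring, show m + 2 + s = m + s + 2 by ring,
      show m + 1 + s = m + s + 1 by ring,
      show m + 5 + t = m + t + 5 by ring, show m + 4 + t = m + t + 4 by ring,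
      show m + 3 + t = m + t + 3 by ring, show m + 2 + t = m + t + 2 by ring,
      show m + 1 + t = m + t + 1 by ring]
  rw [e5 (m + k), e4 (m + k), e3 (m + k), e2 (m + k),
      g5 (m + r), g4 (m + r), g3 (m + r), g2 (m + r),
      h5 (m + s), h4 (m + s), h3 (m + s), h2 (m + s),
      i5 (m + t), i4 (m + t), i3 (m + t), i2 (m + t)]
  ring

/-- full generalization of Hoggatt–Bicknell's identity to four
gibonacci sequences. -/
theorem statement4 (E G H I : ℤ → ℝ)
    (hE : ∀ n : ℤ, E n = E (n - 1) + E (n - 2))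
    (hG : ∀ n : ℤ, G n = G (n - 1) + G (n - 2))
    (hH : ∀ n : ℤ, H n = H (n - 1) + H (n - 2))
    (hI : ∀ n : ℤ, I n = I (n - 1) + I (n - 2))
    (n : ℕ) (k r s t : ℤ) :
    ∑ j ∈ Finset.range (4 * n + 2),
        (-1 : ℝ) ^ ((j : ℤ) - 1) * ((4 * n + 1).choose j) *
          E (j + k) * G (j + r) * H (j + s) * I (j + t) =
      25 ^ n * (E (2 * n + k + 1) * G (2 * n + r + 1) * H (2 * n + s + 1) * I (2 * n + t + 1)
        - E (2 * n + k) * G (2 * n + r) * H (2 * n + s) * I (2 * n + t)) := by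
  have hq : ∀ m : ℤ,
      (fun m : ℤ => E (m + k) * G (m + r) * H (m + s) * I (m + t)) (m + 5) =
        5 * (fun m : ℤ => E (m + k) * G (m + r) * H (m + s) * I (m + t)) (m + 4) +
        15 * (fun m : ℤ => E (m + k) * G (m + r) * H (m + s) * I (m + t)) (m + 3) -
        15 * (fun m : ℤ => E (m + k) * G (m + r) * H (m + s) * I (m + t)) (m + 2) -
        5 * (fun m : ℤ => E (m + k) * G (m + r) * H (m + s) * I (m + t)) (m + 1) +
        (fun m : ℤ => E (m + k) * G (m + r) * H (m + s) * I (m + t)) m := by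
    intro m
    simpa using prod_rec E G H I hE hG hH hI k r s t m
  have key := Ssum_formula (fun m : ℤ => E (m + k) * G (m + r) * H (m + s) * I (m + t)) hq n 0
  rw [Ssum] at key
  simp only [zero_add] at key
  rw [show (2 * (n : ℤ) + 1 + k) = 2 * n + k + 1 by ring,
      show (2 * (n : ℤ) + 1 + r) = 2 * n + r + 1 by ring,
      show (2 * (n : ℤ) + 1 + s) = 2 * n + s + 1 by ring,
      show (2 * (n : ℤ) + 1 + t) = 2 * n + t + 1 by ring] at key
  rw [show 4 * n + 2 = 4 * n + 1 + 1 by ring, ← key]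
  apply Finset.sum_congr rfl
  intro j _
  rw [show (-1 : ℝ) ^ ((j : ℤ) - 1) = -(-1 : ℝ) ^ j by
    rw [zpow_sub₀ (by norm_num : (-1:ℝ) ≠ 0), zpow_one, zpow_natCast]; ring]
  ring
end

section
/- For every integer k, L(2k+1)/(F(2k+1)² + 1) = L(2k)/(F(2k)² + 1) − L(2k+2)/(F(2k+2)² + 1), as an identity of rational numbers (all denominators are positive). -/
/-!
Write `a = F(2k)` and `b = F(2k+1)`. Every Lucas number is `L(n) = 2 F(n+1) - F(n)`, so the three
numerators are `2b - a`, `2a + b` and `a + 3b`, and `F(2k+2) = a + b`. Cassini's identity at the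
even index `2k` reads `b² - ab - a² = 1`, and modulo this relation the claimed identity is a
polynomial identity in `a` and `b`.
-/

section FibonacciRecurrence

variable {u v : ℤ → ℤ}

theorem fib_rec_add_two (hu : ∀ n : ℤ, u n = u (n - 1) + u (n - 2)) (n : ℤ) :
    u (n + 2) = u (n + 1) + u n := by
  simpa [add_sub_assoc] using hu (n + 2)

theorem eq_of_fib_rec (hu : ∀ n : ℤ, u (n + 2) = u (n + 1) + u n)
    (hv : ∀ n : ℤ, v (n + 2) = v (n + 1) + v n) (h0 : u 0 = v 0) (h1 : u 1 = v 1) : u = v := by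
  suffices h : ∀ n : ℤ, u n = v n ∧ u (n + 1) = v (n + 1) from funext fun n => (h n).1
  intro n
  induction n using Int.induction_on with
  | zero => exact ⟨h0, h1⟩
  | succ i ih =>
    refine ⟨ih.2, ?_⟩
    rw [add_assoc, one_add_one_eq_two, hu, hv, ih.1, ih.2]
  | pred i ih =>
    refine ⟨?_, by rw [sub_add_cancel, ih.1]⟩
    have hu' := hu (-(i : ℤ) - 1)
    have hv' := hv (-(i : ℤ) - 1)
    rw [show -(i : ℤ) - 1 + 2 = -i + 1 by ring, sub_add_cancel] at hu' hv'
    linarith [ih.1, ih.2]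

theorem lucas_eq_two_mul_fib_succ_sub_fib (hF : ∀ n : ℤ, u (n + 2) = u (n + 1) + u n)
    (hL : ∀ n : ℤ, v (n + 2) = v (n + 1) + v n) (hF0 : u 0 = 0) (hF1 : u 1 = 1)
    (hL0 : v 0 = 2) (hL1 : v 1 = 1) (n : ℤ) : v n = 2 * u (n + 1) - u n := by
  refine congrFun (eq_of_fib_rec (v := fun m => 2 * u (m + 1) - u m) hL (fun m => ?_) ?_ ?_) n
  · rw [add_right_comm m 2 1, hF (m + 1), add_assoc m 1 1, one_add_one_eq_two, hF m]
    ring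
  · simp [hL0, hF0, hF1]
  · simp [hL1, hF1, show u 2 = 1 by simpa [hF0, hF1] using hF 0]

theorem cassini_succ (hF : ∀ n : ℤ, u (n + 2) = u (n + 1) + u n) (n : ℤ) :
    u (n + 1 + 1) ^ 2 - u (n + 1 + 1) * u (n + 1) - u (n + 1) ^ 2 =
      -(u (n + 1) ^ 2 - u (n + 1) * u n - u n ^ 2) := by
  rw [add_assoc, one_add_one_eq_two, hF]
  ring

theorem cassini (hF : ∀ n : ℤ, u (n + 2) = u (n + 1) + u n) (hF0 : u 0 = 0) (hF1 : u 1 = 1)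
    (n : ℤ) : u (n + 1) ^ 2 - u (n + 1) * u n - u n ^ 2 = n.negOnePow := by
  induction n using Int.induction_on with
  | zero => simp [hF0, hF1]
  | succ i ih => rw [cassini_succ hF, ih, Int.negOnePow_succ, Units.val_neg]
  | pred i ih =>
    have h := cassini_succ hF (-(i : ℤ) - 1)
    rw [sub_add_cancel] at h ⊢
    rw [ih] at h
    rw [Int.negOnePow_sub, Int.negOnePow_one, mul_neg_one, Units.val_neg, h, neg_neg]

end FibonacciRecurrence

theorem div_sq_add_one_eq_sub_of_sq_sub_mul_sub_sq_eq_one {K : Type*} [Field K] [LinearOrder K]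
    [IsStrictOrderedRing K] {a b : K} (h : b ^ 2 - b * a - a ^ 2 = 1) :
    (2 * a + b) / (b ^ 2 + 1) = (2 * b - a) / (a ^ 2 + 1) - (a + 3 * b) / ((a + b) ^ 2 + 1) := by
  field_simp
  linear_combination (-2 * b ^ 3 - 5 * a * b ^ 2 - 3 * a ^ 2 * b - 2 * b - 2 * a ^ 3 - 4 * a) * h

/-- a rational identity relating Lucas and Fibonacci numbers. -/
theorem statement5 (F L : ℤ → ℤ)
    (hF0 : F 0 = 0) (hF1 : F 1 = 1) (hF : ∀ n : ℤ, F n = F (n - 1) + F (n - 2))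
    (hL0 : L 0 = 2) (hL1 : L 1 = 1) (hL : ∀ n : ℤ, L n = L (n - 1) + L (n - 2))
    (k : ℤ) :
    (L (2 * k + 1) : ℚ) / ((F (2 * k + 1) : ℚ) ^ 2 + 1) =
      (L (2 * k) : ℚ) / ((F (2 * k) : ℚ) ^ 2 + 1)
        - (L (2 * k + 2) : ℚ) / ((F (2 * k + 2) : ℚ) ^ 2 + 1) := by
  have hF' := fib_rec_add_two hF
  have hL' := fib_rec_add_two hL
  have hLF := lucas_eq_two_mul_fib_succ_sub_fib hF' hL' hF0 hF1 hL0 hL1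
  have hL_succ : L (2 * k + 1) = F (2 * k + 1) + 2 * F (2 * k) := by
    rw [hLF, add_assoc, one_add_one_eq_two, hF']
    ring
  have hcassini : F (2 * k + 1) ^ 2 - F (2 * k + 1) * F (2 * k) - F (2 * k) ^ 2 = 1 := by
    rw [cassini hF' hF0 hF1, Int.negOnePow_two_mul, Units.val_one]
  rw [hL', hL_succ, hLF (2 * k), hF']
  push_cast
  convert div_sq_add_one_eq_sub_of_sq_sub_mul_sub_sq_eq_one
    (a := (F (2 * k) : ℚ)) (b := F (2 * k + 1)) (by exact_mod_cast hcassini) using 2 <;> ring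
end

section
/- For all non-negative integers k and n, F(k)³·∑_{j=0}^{n} (−1)^{(k+1)(n+j)}·j·C(n+j, 2j)·L(k)^{2j} = (1/10)·((2n+1)·F(2k)·L((2n+1)k) − F((2n+1)k)·L(k)²), as an identity of rational numbers, where C(m,j) denotes the binomial coefficient. -/
/-!
By Binet's formulas, with `u = φ ^ k`, `v = ψ ^ k` and `ε = (-1) ^ (k + 1) = -u v`, the sum is
`ε ^ n t_n (ε L_k ^ 2)`, where `t_n = X b_n'` and `b_n = ∑ C(n + j, 2 j) X ^ j` is the
Morgan–Voyce polynomial. Pascal's rule gives `b_{n+2} = (X + 2) b_{n+1} - b_n`, hence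
`(u - v) ε ^ n b_n (ε (u + v) ^ 2) = u ^ (2n+1) - v ^ (2n+1)`; differentiating the recurrence and
inducing again gives a closed form for `t_n` in `u` and `v`, which is the identity up to powers
of `√5`.
-/

open Finset Polynomial

theorem Nat.choose_add_two_add_choose (n j : ℕ) :
    (n + 2 + (j + 1)).choose (2 * (j + 1)) + (n + (j + 1)).choose (2 * (j + 1)) =
      (n + 1 + j).choose (2 * j) + 2 * (n + 1 + (j + 1)).choose (2 * (j + 1)) := by
  have h1 : (n + j + 3).choose (2 * j + 2) =
      (n + j + 2).choose (2 * j + 1) + (n + j + 2).choose (2 * j + 2) :=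
    Nat.choose_succ_succ' _ _
  have h2 : (n + j + 2).choose (2 * j + 1) =
      (n + j + 1).choose (2 * j) + (n + j + 1).choose (2 * j + 1) :=
    Nat.choose_succ_succ' _ _
  have h3 : (n + j + 2).choose (2 * j + 2) =
      (n + j + 1).choose (2 * j + 1) + (n + j + 1).choose (2 * j + 2) :=
    Nat.choose_succ_succ' _ _
  rw [show n + 2 + (j + 1) = n + j + 3 by ring, show n + (j + 1) = n + j + 1 by ring,
    show n + 1 + j = n + j + 1 by ring, show n + 1 + (j + 1) = n + j + 2 by ring,
    show 2 * (j + 1) = 2 * j + 2 by ring]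
  omega

section MorganVoyce

variable (R : Type*) [CommRing R]

noncomputable def morganVoyce (n : ℕ) : R[X] :=
  ∑ j ∈ range (n + 1), C ((n + j).choose (2 * j) : R) * X ^ j

variable {R}

theorem coeff_morganVoyce (n j : ℕ) : (morganVoyce R n).coeff j = (n + j).choose (2 * j) := by
  simp only [morganVoyce, finsetSum_coeff, coeff_C_mul_X_pow, sum_ite_eq, mem_range]
  split_ifs with hj
  · rfl
  · rw [Nat.choose_eq_zero_of_lt (by omega), Nat.cast_zero]

theorem morganVoyce_zero : morganVoyce R 0 = 1 := by simp [morganVoyce]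

theorem morganVoyce_one : morganVoyce R 1 = X + 1 := by
  simp [morganVoyce, sum_range_succ, add_comm]

theorem morganVoyce_add_two (n : ℕ) :
    morganVoyce R (n + 2) = (X + 2) * morganVoyce R (n + 1) - morganVoyce R n := by
  ext (_ | j)
  · simp only [coeff_morganVoyce, coeff_sub, mul_coeff_zero, coeff_add, coeff_X_zero,
      coeff_ofNat_zero]
    norm_num
  · simp only [coeff_morganVoyce, add_mul, coeff_sub, coeff_add, coeff_X_mul, coeff_ofNat_mul]
    have h := congrArg (Nat.cast : ℕ → R) (Nat.choose_add_two_add_choose n j)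
    push_cast at h
    linear_combination h

theorem coeff_X_mul_derivative (p : R[X]) (j : ℕ) :
    (X * derivative p).coeff j = j * p.coeff j := by
  cases j with
  | zero => simp
  | succ j => rw [coeff_X_mul, coeff_derivative, mul_comm]; push_cast; rfl

theorem X_mul_derivative_morganVoyce_add_two (n : ℕ) :
    X * derivative (morganVoyce R (n + 2)) =
      X * morganVoyce R (n + 1) + (X + 2) * (X * derivative (morganVoyce R (n + 1))) -
        X * derivative (morganVoyce R n) := by
  rw [morganVoyce_add_two]
  simp only [derivative_sub, derivative_mul, derivative_add, derivative_X, derivative_ofNat]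
  ring

theorem eval_X_mul_derivative_morganVoyce (n : ℕ) (x : R) :
    (X * derivative (morganVoyce R n)).eval x =
      ∑ j ∈ range (n + 1), (j : R) * (n + j).choose (2 * j) * x ^ j := by
  have hcoeff (j : ℕ) : (X * derivative (morganVoyce R n)).coeff j =
      (j : R) * (n + j).choose (2 * j) := by
    rw [coeff_X_mul_derivative, coeff_morganVoyce]
  have hdeg : (X * derivative (morganVoyce R n)).natDegree < n + 1 := by
    rw [Nat.lt_succ_iff, natDegree_le_iff_coeff_eq_zero]
    intro j hj
    rw [hcoeff, Nat.choose_eq_zero_of_lt (by omega), Nat.cast_zero, mul_zero]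
  simp only [eval_eq_sum_range' hdeg, hcoeff]

theorem sum_neg_one_pow_mul_choose_eq_eval (k n : ℕ) (y : R) :
    ∑ j ∈ range (n + 1),
        (-1 : R) ^ ((k + 1) * (n + j)) * j * (n + j).choose (2 * j) * y ^ (2 * j) =
      ((-1) ^ (k + 1)) ^ n *
        (X * derivative (morganVoyce R n)).eval ((-1) ^ (k + 1) * y ^ 2) := by
  rw [eval_X_mul_derivative_morganVoyce, mul_sum]
  refine sum_congr rfl fun j _ => ?_
  rw [pow_mul, pow_add, pow_mul, mul_pow]
  ring

variable {u v ε : R}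

theorem sub_mul_eval_morganVoyce (hε : ε ^ 2 = 1) (huv : u * v = -ε) (n : ℕ) :
    (u - v) * (ε ^ n * (morganVoyce R n).eval (ε * (u + v) ^ 2)) =
      u ^ (2 * n + 1) - v ^ (2 * n + 1) := by
  obtain rfl : ε = -(u * v) := by linear_combination huv
  induction n using Nat.twoStepInduction with
  | zero => simp [morganVoyce_zero]
  | one =>
    simp only [morganVoyce_one, eval_add, eval_X, eval_one]
    linear_combination (u - v) * (u + v) ^ 2 * hε
  | more n ih₀ ih₁ =>
    rw [morganVoyce_add_two]
    simp only [eval_sub, eval_mul, eval_add, eval_X, eval_ofNat]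
    -- `u ^ (2 m + 1) - v ^ (2 m + 1)` satisfies the same recurrence up to multiples of
    -- `(u v) ^ 2 - 1`
    linear_combination -(u * v) * (-(u * v) * (u + v) ^ 2 + 2) * ih₁ - (u * v) ^ 2 * ih₀
      + (u + v) ^ 2 * (u ^ (2 * (n + 1) + 1) - v ^ (2 * (n + 1) + 1)) * hε

theorem sub_pow_three_mul_eval_X_mul_derivative_morganVoyce (hε : ε ^ 2 = 1) (huv : u * v = -ε)
    (n : ℕ) :
    2 * (u - v) ^ 3 * (ε ^ n * (X * derivative (morganVoyce R n)).eval (ε * (u + v) ^ 2)) =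
      (u + v) * ((2 * n + 1) * (u - v) * (u ^ (2 * n + 1) + v ^ (2 * n + 1)) -
        (u + v) * (u ^ (2 * n + 1) - v ^ (2 * n + 1))) := by
  obtain rfl : ε = -(u * v) := by linear_combination huv
  induction n using Nat.twoStepInduction with
  | zero =>
    simp only [pow_zero, neg_mul, morganVoyce_zero, derivative_one, mul_zero, eval_zero,
      Nat.cast_zero, zero_add, one_mul, pow_one]
    ring
  | one =>
    simp only [pow_one, neg_mul, morganVoyce_one, derivative_add, derivative_X, derivative_one,
      add_zero, mul_one, eval_X, mul_neg, neg_neg, Nat.cast_one, Nat.reduceAdd]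
    linear_combination 2 * (u - v) ^ 3 * (u + v) ^ 2 * hε
  | more n ih₀ ih₁ =>
    have hB := sub_mul_eval_morganVoyce hε (neg_neg _).symm (n + 1)
    rw [X_mul_derivative_morganVoyce_add_two]
    set t₀ := X * derivative (morganVoyce R n)
    set t₁ := X * derivative (morganVoyce R (n + 1))
    simp only [eval_sub, eval_mul, eval_add, eval_X, eval_ofNat]
    push_cast at ih₀ ih₁ ⊢
    set D₁ := u ^ (2 * (n + 1) + 1) - v ^ (2 * (n + 1) + 1)
    set G₁ := (u + v) * ((2 * (n + 1) + 1) * (u - v) * (u ^ (2 * (n + 1) + 1) +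
      v ^ (2 * (n + 1) + 1)) - (u + v) * D₁)
    linear_combination -(u * v) * (-(u * v) * (u + v) ^ 2 + 2) * ih₁ - (u * v) ^ 2 * ih₀
      + 2 * (u - v) ^ 2 * (u * v) ^ 2 * (u + v) ^ 2 * hB
      + (u + v) ^ 2 * (2 * (u - v) ^ 2 * D₁ + G₁) * hε

end MorganVoyce

theorem eq_of_fib_rec_s7 {M : Type*} [AddCommGroup M] {f g : ℤ → M}
    (hf : ∀ n, f n = f (n - 1) + f (n - 2)) (hg : ∀ n, g n = g (n - 1) + g (n - 2))
    (h0 : f 0 = g 0) (h1 : f 1 = g 1) : f = g := by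
  have key (m : ℤ) : f m = g m ∧ f (m + 1) = g (m + 1) := by
    induction m using Int.induction_on with
    | zero => exact ⟨h0, by simpa using h1⟩
    | succ i ih =>
      refine ⟨ih.2, ?_⟩
      have hfi := hf (i + 1 + 1)
      have hgi := hg (i + 1 + 1)
      rw [add_sub_cancel_right, show (i : ℤ) + 1 + 1 - 2 = i by ring] at hfi hgi
      rw [hfi, hgi, ih.1, ih.2]
    | pred i ih =>
      rw [sub_add_cancel]
      refine ⟨?_, ih.1⟩
      have hfi := hf (-i + 1)
      have hgi := hg (-i + 1)
      rw [add_sub_cancel_right, show -(i : ℤ) + 1 - 2 = -i - 1 by ring] at hfi hgi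
      rw [ih.1, ih.2] at hfi
      exact add_left_cancel (hfi.symm.trans hgi)
  exact funext fun m => (key m).1

theorem zpow_eq_zpow_sub_one_add_zpow_sub_two {K : Type*} [DivisionRing K] {x : K}
    (hx : x ^ 2 = x + 1) (m : ℤ) : x ^ m = x ^ (m - 1) + x ^ (m - 2) := by
  have hx₀ : x ≠ 0 := by
    rintro rfl
    simp at hx
  calc x ^ m = x ^ (m - 2) * x ^ 2 := by
        rw [← zpow_natCast, ← zpow_add₀ hx₀]; norm_num
    _ = x ^ (m - 2) * x + x ^ (m - 2) := by rw [hx, mul_add, mul_one]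
    _ = x ^ (m - 1) + x ^ (m - 2) := by rw [← zpow_add_one₀ hx₀]; ring_nf

open Real goldenRatio in
theorem intCast_eq_goldenRatio_zpow_add_goldenConj_zpow {L : ℤ → ℤ} (hL0 : L 0 = 2)
    (hL1 : L 1 = 1) (hL : ∀ n, L n = L (n - 1) + L (n - 2)) (m : ℤ) :
    (L m : ℝ) = φ ^ m + ψ ^ m := by
  refine congrFun (eq_of_fib_rec_s7 (f := fun m => (L m : ℝ)) (g := fun m => φ ^ m + ψ ^ m)
    (fun n => ?_) (fun n => ?_) ?_ ?_) m
  · simp only [hL n, Int.cast_add]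
  · rw [zpow_eq_zpow_sub_one_add_zpow_sub_two goldenRatio_sq n,
      zpow_eq_zpow_sub_one_add_zpow_sub_two goldenConj_sq n]
    ring
  · norm_num [hL0]
  · simp [hL1, goldenRatio_add_goldenConj]

theorem eq_intFib {F : ℤ → ℤ} (hF0 : F 0 = 0) (hF1 : F 1 = 1)
    (hF : ∀ n, F n = F (n - 1) + F (n - 2)) : F = Int.fib := by
  refine eq_of_fib_rec_s7 hF (fun n => ?_) (by simp [hF0]) (by simp [hF1])
  have h := Int.fib_add_two (n - 2)
  rw [sub_add_cancel, show n - 2 + 1 = n - 1 by ring] at h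
  rw [h, add_comm]

open Real goldenRatio in
/-- an identity of rationals coming from an identity of Jennings. -/
theorem statement7 (F L : ℤ → ℤ)
    (hF0 : F 0 = 0) (hF1 : F 1 = 1) (hF : ∀ n : ℤ, F n = F (n - 1) + F (n - 2))
    (hL0 : L 0 = 2) (hL1 : L 1 = 1) (hL : ∀ n : ℤ, L n = L (n - 1) + L (n - 2))
    (k n : ℕ) :
    (F (k : ℤ) : ℚ) ^ 3 * ∑ j ∈ Finset.range (n + 1),
        (-1 : ℚ) ^ ((k + 1) * (n + j)) * (j : ℚ) * ((n + j).choose (2 * j)) *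
          (L (k : ℤ) : ℚ) ^ (2 * j) =
      (1 / 10) * ((2 * (n : ℚ) + 1) * (F (2 * (k : ℤ)) : ℚ) *
          (L ((2 * (n : ℤ) + 1) * (k : ℤ)) : ℚ)
        - (F ((2 * (n : ℤ) + 1) * (k : ℤ)) : ℚ) * (L (k : ℤ) : ℚ) ^ 2) := by
  obtain rfl := eq_intFib hF0 hF1 hF
  apply Rat.cast_injective (α := ℝ)
  push_cast
  have hpow (x : ℝ) (c : ℕ) : x ^ ((c : ℤ) * k) = (x ^ k) ^ c := by
    rw [← Nat.cast_mul, zpow_natCast, mul_comm, pow_mul]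
  rw [show (2 * (k : ℤ)) = ((2 : ℕ) : ℤ) * k by norm_num,
    show (2 * (n : ℤ) + 1) * k = ((2 * n + 1 : ℕ) : ℤ) * k by push_cast; ring]
  simp only [coe_intFib_eq, intCast_eq_goldenRatio_zpow_add_goldenConj_zpow hL0 hL1 hL, hpow,
    zpow_natCast]
  rw [sum_neg_one_pow_mul_choose_eq_eval]
  set u := φ ^ k
  set v := ψ ^ k
  set ε : ℝ := (-1) ^ (k + 1) with hε_def
  have hε : ε ^ 2 = 1 := by rw [← pow_mul]; exact Even.neg_one_pow ⟨k + 1, by ring⟩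
  have huv : u * v = -ε := by
    rw [← mul_pow, goldenRatio_mul_goldenConj, hε_def, pow_succ, mul_neg_one, neg_neg]
  clear_value u v ε
  have key := sub_pow_three_mul_eval_X_mul_derivative_morganVoyce hε huv n
  have h5 : (√5)⁻¹ ^ 2 = 5⁻¹ := by rw [inv_pow, Real.sq_sqrt (by norm_num)]
  linear_combination (√5)⁻¹ / 10 * key
    + (u - v) ^ 3 * (ε ^ n * (X * derivative (morganVoyce ℝ n)).eval (ε * (u + v) ^ 2))
      * (√5)⁻¹ * h5
end

section
/- For all non-negative integers n and k, the integer 10·F(k)³ divides the integer (2n+1)·F(2k)·L((2n+1)k) − F((2n+1)k)·L(k)². -/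
/-- A sequence satisfying the Fibonacci recurrence on ℤ that vanishes at 0 and 1 is zero. -/
lemma zseq (G : ℤ → ℤ) (hG : ∀ n : ℤ, G n = G (n-1) + G (n-2))
    (h0 : G 0 = 0) (h1 : G 1 = 0) : ∀ n : ℤ, G n = 0 := by
  have step : ∀ x : ℤ, G (x+2) = G (x+1) + G x := by
    intro x
    have h := hG (x+2)
    rw [show x+2-1 = x+1 by ring, show x+2-2 = x by ring] at h
    exact h
  have fwd : ∀ n : ℕ, G n = 0 ∧ G ((n:ℤ)+1) = 0 := by
    intro n
    induction n with
    | zero => exact ⟨h0, h1⟩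
    | succ n ih =>
      refine ⟨by push_cast; exact ih.2, ?_⟩
      have h := step n
      push_cast
      rw [show (n:ℤ)+1+1 = (n:ℤ)+2 by ring, h, ih.1, ih.2]
      ring
  have bwd : ∀ n : ℕ, G (-(n:ℤ)) = 0 ∧ G (-(n:ℤ)+1) = 0 := by
    intro n
    induction n with
    | zero => refine ⟨by simpa using h0, by simpa using h1⟩
    | succ n ih =>
      have h := step (-(n:ℤ)-1)
      rw [show -(n:ℤ)-1+2 = -(n:ℤ)+1 by ring, show -(n:ℤ)-1+1 = -(n:ℤ) by ring] at h
      constructor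
      · rw [show -(((n:ℕ)+1:ℕ):ℤ) = -(n:ℤ)-1 by push_cast; ring]
        have : G (-(n:ℤ)-1) = G (-(n:ℤ)+1) - G (-(n:ℤ)) := by linarith
        rw [this, ih.1, ih.2]; ring
      · rw [show -(((n:ℕ)+1:ℕ):ℤ)+1 = -(n:ℤ) by push_cast; ring]
        exact ih.1
  intro m
  obtain ⟨n, rfl | rfl⟩ := Int.eq_nat_or_neg m
  · exact (fwd n).1
  · exact (bwd n).1
lemma addg (F : ℤ → ℤ) (hF0 : F 0 = 0) (hF1 : F 1 = 1)
    (hF : ∀ n : ℤ, F n = F (n-1) + F (n-2))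
    (G : ℤ → ℤ) (hG : ∀ n : ℤ, G n = G (n-1) + G (n-2)) :
    ∀ a b : ℤ, G (a+b) = G a * F (b+1) + G (a-1) * F b := by
  intro a
  have key : ∀ b : ℤ, G (a+b) - (G a * F (b+1) + G (a-1) * F b) = 0 := by
    apply zseq
    · intro x
      have e1 := hG (a+x)
      have e2 := hF (x+1)
      have e3 := hF x
      rw [show a+x-1 = a+(x-1) by ring, show a+x-2 = a+(x-2) by ring] at e1
      rw [show x+1-1 = x by ring, show x+1-2 = x-1 by ring] at e2
      rw [show x-1+1 = x by ring, show x-2+1 = x-1 by ring]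
      linear_combination e1 - G a * e2 - G (a-1) * e3
    · norm_num [hF0, hF1]
    · have h2 := hF 2
      norm_num [hF0, hF1] at h2
      have hg := hG (a+1)
      rw [show a+1-1 = a by ring, show a+1-2 = a-1 by ring] at hg
      rw [show (1:ℤ)+1 = 2 by ring, h2, hF1, hg]
      ring
  intro b
  linarith [key b]
lemma neg_pair (G : ℤ → ℤ) (hG : ∀ n : ℤ, G n = G (n-1) + G (n-2)) (s : ℤ)
    (h0 : G 0 = s * G 0) (h1 : G (-1) = -(s * G 1)) :
    ∀ n : ℕ, G (-(n:ℤ)) = s * (-1)^n * G n := by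
  have pair : ∀ n : ℕ, G (-(n:ℤ)) = s*(-1)^n*G (n:ℤ) ∧
      G (-(n:ℤ)-1) = s*(-1)^(n+1)*G ((n:ℤ)+1) := by
    intro n
    induction n with
    | zero =>
      constructor
      · simpa using h0
      · simpa using h1
    | succ n ih =>
      have hg := hG (-(n:ℤ))
      rw [show -(n:ℤ)-2 = -(n:ℤ)-1-1 by ring] at hg
      constructor
      · rw [show -(((n:ℕ)+1:ℕ):ℤ) = -(n:ℤ)-1 by push_cast; ring, ih.2]
        push_cast; ring
      · rw [show -(((n:ℕ)+1:ℕ):ℤ)-1 = -(n:ℤ)-1-1 by push_cast; ring]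
        have e : G (-(n:ℤ)-1-1) = G (-(n:ℤ)) - G (-(n:ℤ)-1) := by linarith
        rw [e, ih.1, ih.2]
        push_cast
        have hg2 := hG ((n:ℤ)+2)
        rw [show (n:ℤ)+2-1 = (n:ℤ)+1 by ring, show (n:ℤ)+2-2 = (n:ℤ) by ring] at hg2
        rw [show (n:ℤ)+1+1 = (n:ℤ)+2 by ring, hg2]
        ring
  exact fun n => (pair n).1

def XiQ (F L : ℤ → ℤ) (k m : ℤ) : ℤ :=
  m * F (2 * k) * L (m * k) - F (m * k) * L k ^ 2

/-- a divisibility property of Fibonacci and Lucas numbers. -/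
theorem statement8 (F L : ℤ → ℤ)
    (hF0 : F 0 = 0) (hF1 : F 1 = 1) (hF : ∀ n : ℤ, F n = F (n - 1) + F (n - 2))
    (hL0 : L 0 = 2) (hL1 : L 1 = 1) (hL : ∀ n : ℤ, L n = L (n - 1) + L (n - 2))
    (n k : ℕ) :
    10 * F (k : ℤ) ^ 3 ∣
      (2 * (n : ℤ) + 1) * F (2 * (k : ℤ)) * L ((2 * (n : ℤ) + 1) * (k : ℤ))
        - F ((2 * (n : ℤ) + 1) * (k : ℤ)) * L (k : ℤ) ^ 2 := by
  -- basic values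
  have hFm1 : F (-1) = 1 := by
    have h := hF 1; norm_num [hF0, hF1] at h; linarith
  have hLm1 : L (-1) = -1 := by
    have h := hL 1; norm_num [hL0, hL1] at h; linarith
  have hF2 : F 2 = 1 := by
    have h := hF 2; norm_num [hF0, hF1] at h; exact h
  have hL2 : L 2 = 3 := by
    have h := hL 2; norm_num [hL0, hL1] at h; linarith
  have negF := neg_pair F hF (-1) (by rw [hF0]; ring) (by rw [hFm1, hF1]; ring)
  have negL := neg_pair L hL 1 (by rw [hL0]; ring) (by rw [hLm1, hL1]; ring)
  have addF := addg F hF0 hF1 hF F hF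
  have addL := addg F hF0 hF1 hF L hL
  -- L m = F (m+1) + F (m-1)
  have IL : ∀ m : ℤ, L m - (F (m+1) + F (m-1)) = 0 := by
    apply zseq
    · intro x
      have e1 := hL x
      have e2 := hF (x+1)
      have e3 := hF (x-1)
      rw [show x+1-1 = x by ring, show x+1-2 = x-1 by ring] at e2
      rw [show x-1-1 = x-2 by ring, show x-1-2 = x-3 by ring] at e3
      rw [show x-1+1 = x by ring, show x-2+1 = x-1 by ring, show x-1-1 = x-2 by ring,
        show x-2-1 = x-3 by ring]
      linear_combination e1 - e2 - e3
    · norm_num [hL0, hF1, hFm1]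
    · norm_num [hL1, hF0, hF2]
  -- L m = 2 F(m+1) - F m
  have I2 : ∀ m : ℤ, 2 * F (m+1) - F m - L m = 0 := by
    apply zseq
    · intro x
      have e1 := hL x
      have e2 := hF (x+1)
      have e3 := hF x
      rw [show x+1-1 = x by ring, show x+1-2 = x-1 by ring] at e2
      rw [show x-1+1 = x by ring, show x-2+1 = x-1 by ring]
      linear_combination 2 * e2 - e3 - e1
    · norm_num [hL0, hF0, hF1]
    · norm_num [hL1, hF1, hF2]
  -- 5 F m = 2 L(m+1) - L m
  have I5 : ∀ m : ℤ, 2 * L (m+1) - L m - 5 * F m = 0 := by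
    apply zseq
    · intro x
      have e1 := hL (x+1)
      have e2 := hL x
      have e3 := hF x
      rw [show x+1-1 = x by ring, show x+1-2 = x-1 by ring] at e1
      rw [show x-1+1 = x by ring, show x-2+1 = x-1 by ring]
      linear_combination 2 * e1 - e2 - 5 * e3
    · norm_num [hL0, hL1, hF0]
    · norm_num [hL1, hL2, hF1]
  -- F(2k) = F k * L k
  have R4 : F (2*(k:ℤ)) = F (k:ℤ) * L (k:ℤ) := by
    have h := addF (k:ℤ) (k:ℤ)
    have il := IL (k:ℤ)
    rw [show 2*(k:ℤ) = (k:ℤ)+(k:ℤ) by ring]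
    linear_combination h - F (k:ℤ) * il
  -- parity facts
  have hFnegk : F (-(k:ℤ)) = -((-1:ℤ)^k * F (k:ℤ)) := by
    have h := negF k; linarith [h]
  have hLnegk : L (-(k:ℤ)) = (-1:ℤ)^k * L (k:ℤ) := by
    have h := negL k; linarith [h]
  have hFneg2k : F (-(2*(k:ℤ))) = - F (2*(k:ℤ)) := by
    have h := negF (2*k)
    push_cast at h
    rw [pow_mul] at h
    norm_num at h
    linarith [h]
  have hLneg2k : L (-(2*(k:ℤ))) = L (2*(k:ℤ)) := by
    have h := negL (2*k)
    push_cast at h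
    rw [pow_mul] at h
    norm_num at h
    linarith [h]
  have hFneg2k1 : F (-(2*(k:ℤ))-1) = F (2*(k:ℤ)+1) := by
    have h := negF (2*k+1)
    push_cast at h
    rw [pow_succ, pow_mul] at h
    norm_num at h
    rw [show (-1:ℤ) + -(2*(k:ℤ)) = -(2*(k:ℤ))-1 by ring] at h
    linarith [h]
  have hLneg2k1 : L (-(2*(k:ℤ))-1) = - L (2*(k:ℤ)+1) := by
    have h := negL (2*k+1)
    push_cast at h
    rw [pow_succ, pow_mul] at h
    norm_num at h
    rw [show (-1:ℤ) + -(2*(k:ℤ)) = -(2*(k:ℤ))-1 by ring] at h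
    linarith [h]
  -- value of F and L at 1 - 2k
  have hF1m2k : F (1-2*(k:ℤ)) = F (2*(k:ℤ)+1) - F (2*(k:ℤ)) := by
    have h := hF (1-2*(k:ℤ))
    rw [show 1-2*(k:ℤ)-1 = -(2*(k:ℤ)) by ring, show 1-2*(k:ℤ)-2 = -(2*(k:ℤ))-1 by ring] at h
    rw [h, hFneg2k, hFneg2k1]; ring
  have hL1m2k : L (1-2*(k:ℤ)) = L (2*(k:ℤ)) - L (2*(k:ℤ)+1) := by
    have h := hL (1-2*(k:ℤ))
    rw [show 1-2*(k:ℤ)-1 = -(2*(k:ℤ)) by ring, show 1-2*(k:ℤ)-2 = -(2*(k:ℤ))-1 by ring] at h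
    rw [h, hLneg2k, hLneg2k1]; ring
  -- shift identities
  have R1 : ∀ x : ℤ, F (x + 2*(k:ℤ)) - (L (2*(k:ℤ)) * F x - F (x - 2*(k:ℤ))) = 0 := by
    apply zseq
    · intro x
      have e1 := hF (x + 2*(k:ℤ))
      have e2 := hF x
      have e3 := hF (x - 2*(k:ℤ))
      rw [show x+2*(k:ℤ)-1 = x-1+2*(k:ℤ) by ring, show x+2*(k:ℤ)-2 = x-2+2*(k:ℤ) by ring] at e1
      rw [show x-2*(k:ℤ)-1 = x-1-2*(k:ℤ) by ring, show x-2*(k:ℤ)-2 = x-2-2*(k:ℤ) by ring] at e3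
      linear_combination e1 - L (2*(k:ℤ)) * e2 + e3
    · rw [show (0:ℤ)+2*(k:ℤ) = 2*(k:ℤ) by ring, show (0:ℤ)-2*(k:ℤ) = -(2*(k:ℤ)) by ring,
        hF0, hFneg2k]
      ring
    · rw [show (1:ℤ)+2*(k:ℤ) = 2*(k:ℤ)+1 by ring, hF1, hF1m2k]
      linear_combination I2 (2*(k:ℤ))
  have R2 : ∀ x : ℤ, L (x + 2*(k:ℤ)) - (L (2*(k:ℤ)) * L x - L (x - 2*(k:ℤ))) = 0 := by
    apply zseq
    · intro x
      have e1 := hL (x + 2*(k:ℤ))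
      have e2 := hL x
      have e3 := hL (x - 2*(k:ℤ))
      rw [show x+2*(k:ℤ)-1 = x-1+2*(k:ℤ) by ring, show x+2*(k:ℤ)-2 = x-2+2*(k:ℤ) by ring] at e1
      rw [show x-2*(k:ℤ)-1 = x-1-2*(k:ℤ) by ring, show x-2*(k:ℤ)-2 = x-2-2*(k:ℤ) by ring] at e3
      linear_combination e1 - L (2*(k:ℤ)) * e2 + e3
    · rw [show (0:ℤ)+2*(k:ℤ) = 2*(k:ℤ) by ring, show (0:ℤ)-2*(k:ℤ) = -(2*(k:ℤ)) by ring,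
        hL0, hLneg2k]
      ring
    · rw [show (1:ℤ)+2*(k:ℤ) = 2*(k:ℤ)+1 by ring, hL1, hL1m2k]
      ring
  have R3 : ∀ x : ℤ, L (x + 2*(k:ℤ)) - L (x - 2*(k:ℤ)) - 5 * F x * F (2*(k:ℤ)) = 0 := by
    apply zseq
    · intro x
      have e1 := hL (x + 2*(k:ℤ))
      have e2 := hL (x - 2*(k:ℤ))
      have e3 := hF x
      rw [show x+2*(k:ℤ)-1 = x-1+2*(k:ℤ) by ring, show x+2*(k:ℤ)-2 = x-2+2*(k:ℤ) by ring] at e1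
      rw [show x-2*(k:ℤ)-1 = x-1-2*(k:ℤ) by ring, show x-2*(k:ℤ)-2 = x-2-2*(k:ℤ) by ring] at e2
      linear_combination e1 - e2 - 5 * F (2*(k:ℤ)) * e3
    · rw [show (0:ℤ)+2*(k:ℤ) = 2*(k:ℤ) by ring, show (0:ℤ)-2*(k:ℤ) = -(2*(k:ℤ)) by ring,
        hF0, hLneg2k]
      ring
    · rw [show (1:ℤ)+2*(k:ℤ) = 2*(k:ℤ)+1 by ring, hF1, hL1m2k]
      linear_combination I5 (2*(k:ℤ))
  -- F k divides F (m k)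
  have div : ∀ m : ℕ, F (k:ℤ) ∣ F ((m:ℤ) * (k:ℤ)) := by
    intro m
    induction m with
    | zero => simp [hF0]
    | succ m ih =>
      rw [show (((m:ℕ)+1:ℕ):ℤ) * (k:ℤ) = (m:ℤ)*(k:ℤ) + (k:ℤ) by push_cast; ring]
      rw [addF ((m:ℤ)*(k:ℤ)) (k:ℤ)]
      exact dvd_add (ih.mul_right _) (dvd_mul_left _ _)
  -- the key recurrence for Xi
  have key : ∀ m : ℤ, XiQ F L (k:ℤ) (m+2) =
      L (2*(k:ℤ)) * XiQ F L (k:ℤ) m - XiQ F L (k:ℤ) (m-2)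
        + 10 * F (k:ℤ)^2 * L (k:ℤ)^2 * F (m*(k:ℤ)) := by
    intro m
    have r1 := R1 (m*(k:ℤ))
    have r2 := R2 (m*(k:ℤ))
    have r3 := R3 (m*(k:ℤ))
    simp only [XiQ]
    rw [show (m+2)*(k:ℤ) = m*(k:ℤ) + 2*(k:ℤ) by ring,
      show (m-2)*(k:ℤ) = m*(k:ℤ) - 2*(k:ℤ) by ring]
    linear_combination (-(L (k:ℤ)^2)) * r1 + (m * F (2*(k:ℤ))) * r2 + (2 * F (2*(k:ℤ))) * r3
      + (10 * F (m*(k:ℤ)) * (F (2*(k:ℤ)) + F (k:ℤ) * L (k:ℤ))) * R4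
  have Xi1 : XiQ F L (k:ℤ) 1 = 0 := by
    simp only [XiQ]
    rw [show (1:ℤ)*(k:ℤ) = (k:ℤ) by ring]
    linear_combination L (k:ℤ) * R4
  have Xim1 : XiQ F L (k:ℤ) (-1) = 0 := by
    simp only [XiQ]
    rw [show (-1:ℤ)*(k:ℤ) = -(k:ℤ) by ring, hFnegk, hLnegk]
    linear_combination (-((-1:ℤ)^k) * L (k:ℤ)) * R4
  -- main induction
  have main : ∀ j : ℕ, (10 * F (k:ℤ)^3 ∣ XiQ F L (k:ℤ) (2*(j:ℤ)+1)) ∧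
      (10 * F (k:ℤ)^3 ∣ XiQ F L (k:ℤ) (2*(j:ℤ)+3)) := by
    intro j
    induction j with
    | zero =>
      constructor
      · norm_num [Xi1]
      · rw [show 2*((0:ℕ):ℤ)+3 = (1:ℤ)+2 by norm_num, key 1, Xi1,
          show (1:ℤ)-2 = -1 by norm_num, Xim1, show (1:ℤ)*(k:ℤ) = (k:ℤ) by ring]
        exact ⟨L (k:ℤ)^2, by ring⟩
    | succ j ih =>
      constructor
      · rw [show 2*(((j:ℕ)+1:ℕ):ℤ)+1 = 2*(j:ℤ)+3 by push_cast; ring]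
        exact ih.2
      · rw [show 2*(((j:ℕ)+1:ℕ):ℤ)+3 = (2*(j:ℤ)+3)+2 by push_cast; ring,
          key (2*(j:ℤ)+3), show 2*(j:ℤ)+3-2 = 2*(j:ℤ)+1 by ring]
        have hd := div (2*j+3)
        rw [show (((2*j+3:ℕ)):ℤ) = 2*(j:ℤ)+3 by push_cast; ring] at hd
        obtain ⟨t, ht⟩ := hd
        refine dvd_add (dvd_sub (ih.2.mul_left _) ih.1) ⟨L (k:ℤ)^2 * t, ?_⟩
        rw [ht]; ring
  have h := (main n).1
  simpa only [XiQ] using h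
end

section
/- For every integer k, G(k)²·(G(k+1)·(G(k+2)+G(k)) + G(k+2)·(G(k+3)+G(k+1)) − G(k)·(G(k+1)+G(k−1))) + G(k+1)²·(G(k)·(G(k+1)+G(k−1)) + G(k+2)·(G(k+3)+G(k+1)) − G(k+1)·(G(k+2)+G(k))) + G(k+2)²·(G(k)·(G(k+1)+G(k−1)) + G(k+1)·(G(k+2)+G(k)) − G(k+2)·(G(k+3)+G(k+1))) = 0. -/
/-- an identity for gibonacci sequences arising from Candido's
identity. -/
theorem statement9 (G : ℤ → ℝ) (hG : ∀ n : ℤ, G n = G (n - 1) + G (n - 2))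
    (k : ℤ) :
    G k ^ 2 * (G (k + 1) * (G (k + 2) + G k) + G (k + 2) * (G (k + 3) + G (k + 1))
        - G k * (G (k + 1) + G (k - 1)))
      + G (k + 1) ^ 2 * (G k * (G (k + 1) + G (k - 1)) + G (k + 2) * (G (k + 3) + G (k + 1))
        - G (k + 1) * (G (k + 2) + G k))
      + G (k + 2) ^ 2 * (G k * (G (k + 1) + G (k - 1)) + G (k + 1) * (G (k + 2) + G k)
        - G (k + 2) * (G (k + 3) + G (k + 1))) = 0 := by
  have h1 := hG (k + 1)
  have h2 := hG (k + 2)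
  have h3 := hG (k + 3)
  simp only [show k + 1 - 1 = k by ring, show k + 1 - 2 = k - 1 by ring,
    show k + 2 - 1 = k + 1 by ring, show k + 2 - 2 = k by ring,
    show k + 3 - 1 = k + 2 by ring, show k + 3 - 2 = k + 1 by ring] at h1 h2 h3
  rw [h3, h2, h1]; ring
end

section
/- Let n be a non-negative integer and let k be any integer. Then 6·(∑_{j=0}^{2n−1} G(j+k)²)·(∑_{j=0}^{2n−1} G(j+k)·(G(j+k+1) + G(j+k−1))) = F(2n)²·(G(k+n−2)³·(G(k+n−1) + G(k+n−3)) + 4·G(k+n−1)³·(G(k+n) + G(k+n−2)) + 4·G(k+n)³·(G(k+n+1) + G(k+n−1)) + G(k+n+1)³·(G(k+n+2) + G(k+n))). -/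
/-!
Both sums are instances of a window identity: for gibonacci sequences `G`, `H`, the sum of
`G j * H j` over `2n` consecutive indices is `F (2n)` times the same sum over the two middle
indices. By induction on `n` this reduces to the two-point identity
`G (c-n-1) H (c-n-1) + G (c+n) H (c+n) = F (2n+1) (G (c-1) H (c-1) + G c H c)`, which follows by
expanding both outer values in the basis `G (c-1)`, `G c`, using `F (-m) = (-1)^(m+1) F m` and
`F (2n+1) = F n ^ 2 + F (n+1) ^ 2`. Taking `H = G` and `H m = G (m+1) + G (m-1)` evaluates the two
sums, and what remains is a quartic identity in the two middle values `G (k+n-1)`, `G (k+n)`.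
-/

open Finset

def IsGibonacci {R : Type*} [Add R] (G : ℤ → R) : Prop :=
  ∀ n, G n = G (n - 1) + G (n - 2)

namespace IsGibonacci

variable {R : Type*} [CommRing R] {F G H : ℤ → R}

theorem add_one (hG : IsGibonacci G) (n : ℤ) : G (n + 1) = G n + G (n - 1) := by
  have h := hG (n + 1)
  rwa [add_sub_cancel_right, show n + 1 - 2 = n - 1 by ring] at h

theorem sub_one (hG : IsGibonacci G) (n : ℤ) : G (n - 1) = G (n + 1) - G n := by
  rw [hG.add_one]; ring

theorem comp_add_const (hG : IsGibonacci G) (c : ℤ) : IsGibonacci (fun n => G (n + c)) :=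
  fun n => by simpa only [sub_add_eq_add_sub] using hG (n + c)

theorem add (hG : IsGibonacci G) (hH : IsGibonacci H) : IsGibonacci (fun n => G n + H n) :=
  fun n => by beta_reduce; rw [hG n, hH n]; ring

theorem mul_const (hG : IsGibonacci G) (a : R) : IsGibonacci (fun n => G n * a) :=
  fun n => by beta_reduce; rw [hG n]; ring

theorem succ_add_pred (hG : IsGibonacci G) : IsGibonacci (fun n => G (n + 1) + G (n - 1)) := by
  simpa only [← sub_eq_add_neg] using (hG.comp_add_const 1).add (hG.comp_add_const (-1))

theorem ext (hG : IsGibonacci G) (hH : IsGibonacci H) (h0 : G 0 = H 0) (h1 : G 1 = H 1) :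
    G = H := by
  suffices ∀ n, G n = H n ∧ G (n + 1) = H (n + 1) from funext fun n => (this n).1
  intro n
  induction n using Int.induction_on with
  | zero => exact ⟨h0, h1⟩
  | succ i ih => exact ⟨ih.2, by rw [hG.add_one, hH.add_one, add_sub_cancel_right, ih.1, ih.2]⟩
  | pred i ih =>
    refine ⟨?_, by rw [sub_add_cancel]; exact ih.1⟩
    rw [hG.sub_one, hH.sub_one, ih.1, ih.2]

theorem apply_add (hF0 : F 0 = 0) (hF1 : F 1 = 1) (hF : IsGibonacci F) (hG : IsGibonacci G)
    (c m : ℤ) : G (c + m) = F m * G (c - 1) + F (m + 1) * G c := by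
  have hF2 : F 2 = 1 := by simpa [hF0, hF1] using hF.add_one 1
  have key : (fun m => G (m + c)) = fun m => F m * G (c - 1) + F (m + 1) * G c :=
    (hG.comp_add_const c).ext ((hF.mul_const _).add ((hF.comp_add_const 1).mul_const _))
      (by simp only [zero_add, hF0, hF1]; ring)
      (by simp only [one_add_one_eq_two, hF1, hF2]; rw [add_comm, hG.add_one]; ring)
  simpa only [add_comm m] using congrFun key m

theorem neg_natCast (hF0 : F 0 = 0) (hF1 : F 1 = 1) (hF : IsGibonacci F) (n : ℕ) :
    F (-n) = (-1) ^ (n + 1) * F n := by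
  suffices ∀ n : ℕ, F (-n) = (-1) ^ (n + 1) * F n ∧ F (-n - 1) = (-1) ^ n * F (n + 1) by
    exact (this n).1
  intro n
  induction n with
  | zero => simpa [hF0, hF1] using hF.sub_one 0
  | succ n ih =>
    refine ⟨by rw [Nat.cast_succ, neg_add', ih.2, pow_succ]; ring, ?_⟩
    rw [hF.sub_one, Nat.cast_succ, neg_add', sub_add_cancel, ih.1, ih.2, hF.add_one (n + 1),
      add_sub_cancel_right]
    ring

theorem two_mul_add_one (hF0 : F 0 = 0) (hF1 : F 1 = 1) (hF : IsGibonacci F) (n : ℤ) :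
    F (2 * n + 1) = F n ^ 2 + F (n + 1) ^ 2 := by
  rw [show 2 * n + 1 = n + 1 + n by ring, apply_add hF0 hF1 hF hF, add_sub_cancel_right]
  ring

theorem mul_add_mul_symm_eq (hF0 : F 0 = 0) (hF1 : F 1 = 1) (hF : IsGibonacci F)
    (hG : IsGibonacci G) (hH : IsGibonacci H) (c : ℤ) (n : ℕ) :
    G (c - (n + 1)) * H (c - (n + 1)) + G (c + n) * H (c + n) =
      F (2 * n + 1) * (G (c - 1) * H (c - 1) + G c * H c) := by
  have hF_neg : F (-(n + 1) + 1) = (-1) ^ (n + 1) * F n := by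
    rw [show -((n : ℤ) + 1) + 1 = -n by ring, neg_natCast hF0 hF1 hF]
  have hF_neg_succ : F (-(n + 1)) = (-1) ^ n * F (n + 1) := by
    simpa [pow_succ] using neg_natCast hF0 hF1 hF (n + 1)
  have hsign : ((-1 : R) ^ n) ^ 2 = 1 := by
    rw [← pow_mul]; exact Even.neg_one_pow ⟨n, by ring⟩
  have hG_add := apply_add hF0 hF1 hF hG c
  have hH_add := apply_add hF0 hF1 hF hH c
  rw [sub_eq_add_neg c, hG_add, hH_add, hG_add, hH_add, hF_neg, hF_neg_succ,
    two_mul_add_one hF0 hF1 hF]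
  linear_combination
    (F (n + 1) * G (c - 1) - F n * G c) * (F (n + 1) * H (c - 1) - F n * H c) * hsign

theorem sum_range_two_mul_mul (hF0 : F 0 = 0) (hF1 : F 1 = 1) (hF : IsGibonacci F)
    (hG : IsGibonacci G) (hH : IsGibonacci H) (n : ℕ) (k : ℤ) :
    ∑ j ∈ range (2 * n), G (j + k) * H (j + k) =
      F (2 * n) * (G (k + n - 1) * H (k + n - 1) + G (k + n) * H (k + n)) := by
  induction n generalizing k with
  | zero => simp [hF0]
  | succ n ih =>
    have hends := mul_add_mul_symm_eq hF0 hF1 hF hG hH (k + n + 1) n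
    have hF_succ : F (2 * (n + 1 : ℕ)) = F (2 * n + 1) + F (2 * n) := by
      rw [Nat.cast_succ, show (2 : ℤ) * (n + 1) = 2 * n + 1 + 1 by ring, hF.add_one,
        add_sub_cancel_right]
    rw [show 2 * (n + 1) = 2 * n + 1 + 1 by ring, sum_range_succ, sum_range_succ', hF_succ]
    have hmid : ∑ j ∈ range (2 * n), G (↑(j + 1) + k) * H (↑(j + 1) + k) =
        F (2 * n) * (G (k + n) * H (k + n) + G (k + n + 1) * H (k + n + 1)) := by
      simp only [Nat.cast_succ, add_right_comm _ (1 : ℤ) k, add_assoc _ k 1, ih]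
      rw [add_right_comm k 1, add_sub_cancel_right]
    rw [show k + n + 1 - (n + 1) = k by ring, add_sub_cancel_right] at hends
    rw [hmid, Nat.cast_zero, zero_add,
      show ((2 * n + 1 : ℕ) : ℤ) + k = k + n + 1 + n by push_cast; ring,
      Nat.cast_succ, ← add_assoc, add_sub_cancel_right]
    linear_combination hends

theorem sum_pow_three_mul_succ_add_pred (hG : IsGibonacci G) (c : ℤ) :
    G (c - 2) ^ 3 * (G (c - 1) + G (c - 3)) + 4 * G (c - 1) ^ 3 * (G c + G (c - 2))
        + 4 * G c ^ 3 * (G (c + 1) + G (c - 1)) + G (c + 1) ^ 3 * (G (c + 2) + G c) =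
      6 * (G (c - 1) ^ 2 + G c ^ 2) *
        (G (c - 1) * (G c + G (c - 2)) + G c * (G (c + 1) + G (c - 1))) := by
  have h_add_two : G (c + 2) = G (c + 1) + G c := by
    rw [show c + 2 = c + 1 + 1 by ring, hG.add_one (c + 1), add_sub_cancel_right]
  have h_sub_two : G (c - 2) = G c - G (c - 1) := by
    linear_combination -hG c
  have h_sub_three : G (c - 3) = G (c - 1) - G (c - 2) := by
    have h := hG (c - 1)
    rw [sub_sub, sub_sub, one_add_one_eq_two, show (1 : ℤ) + 2 = 3 by norm_num] at h
    linear_combination -h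
  rw [h_add_two, h_sub_three, h_sub_two, hG.add_one c]
  ring

end IsGibonacci

/-- an identity derived from Melham's Candido-type identity. -/
theorem statement10 (F : ℤ → ℤ)
    (hF0 : F 0 = 0) (hF1 : F 1 = 1) (hF : ∀ n : ℤ, F n = F (n - 1) + F (n - 2))
    (G : ℤ → ℝ) (hG : ∀ n : ℤ, G n = G (n - 1) + G (n - 2))
    (n : ℕ) (k : ℤ) :
    6 * (∑ j ∈ Finset.range (2 * n), G (j + k) ^ 2) *
        (∑ j ∈ Finset.range (2 * n), G (j + k) * (G (j + k + 1) + G (j + k - 1))) =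
      (F (2 * n) : ℝ) ^ 2 *
        (G (k + n - 2) ^ 3 * (G (k + n - 1) + G (k + n - 3))
          + 4 * G (k + n - 1) ^ 3 * (G (k + n) + G (k + n - 2))
          + 4 * G (k + n) ^ 3 * (G (k + n + 1) + G (k + n - 1))
          + G (k + n + 1) ^ 3 * (G (k + n + 2) + G (k + n))) := by
  have hFℝ : IsGibonacci (fun m => (F m : ℝ)) := fun m => by beta_reduce; exact_mod_cast hF m
  have hF0ℝ : (F 0 : ℝ) = 0 := by exact_mod_cast hF0
  have hF1ℝ : (F 1 : ℝ) = 1 := by exact_mod_cast hF1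
  have hsq := IsGibonacci.sum_range_two_mul_mul hF0ℝ hF1ℝ hFℝ hG hG n k
  have hmixed :=
    IsGibonacci.sum_range_two_mul_mul hF0ℝ hF1ℝ hFℝ hG (IsGibonacci.succ_add_pred hG) n k
  simp only [← sq, sub_add_cancel, sub_sub, one_add_one_eq_two] at hsq hmixed
  rw [hsq, hmixed, IsGibonacci.sum_pow_three_mul_succ_add_pred hG]
  ring
end

section
/- For every non-negative integer n, the following identities of rational numbers hold: ∑_{k=1}^{n} (−1)^{k−1}·F(k+2)²·F(2k+4)/(F(k+2)⁴ − 1) = 5/6 + ((−1)^{n−1}/2)·(F(2n+3)/(F(n+1)·F(n+2)) − F(2n+5)/(F(n+2)·F(n+3)) + F(2n+7)/(F(n+3)·F(n+4))), and ∑_{k=1}^{n} (−1)^{k−1}·L(k+2)²·F(2k+4)/(L(k+2)⁴ − 25) = 5/14 + ((−1)^{n−1}/2)·(F(2n+3)/(L(n+1)·L(n+2)) − F(2n+5)/(L(n+2)·L(n+3)) + F(2n+7)/(L(n+3)·L(n+4))). -/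
/-!
Both sequences are pinned down by the two-sided recurrence and two initial values, so `F` is
`Int.fib` and `L n = F (n - 1) + F (n + 1)`. Put `x m = F (2m+3) / (D (m+1) D (m+2))` with
`D = F` or `D = L`, and `g m = x m - x (m+1) + x (m+2)`. The `k`-th summand without its sign is
`(x (k-1) + x (k+2)) / 2 = (g (k-1) + g k) / 2`, so the alternating sum telescopes to
`g 0 / 2 + (-1)^(n-1) g n / 2`. With `a = F k` and `b = F (k+1)`, every term of that per-summand
identity is a rational function of `a` and `b`, and the identity holds modulo Cassini's relation
`(b² - ab - a²)² = 1`.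
-/

open Finset Int

theorem eq_of_fib_recurrence {R : Type*} [AddCommGroup R] {u v : ℤ → R}
    (hu : ∀ n, u n = u (n - 1) + u (n - 2)) (hv : ∀ n, v n = v (n - 1) + v (n - 2))
    (h0 : u 0 = v 0) (h1 : u 1 = v 1) : u = v := by
  suffices h : ∀ n : ℤ, u n = v n ∧ u (n + 1) = v (n + 1) from funext fun n => (h n).1
  intro n
  induction n using Int.induction_on with
  | zero => exact ⟨h0, by simpa using h1⟩
  | succ n ih =>
    refine ⟨ih.2, ?_⟩
    rw [hu, hv, add_sub_cancel_right, show (n : ℤ) + 1 + 1 - 2 = n by ring, ih.1, ih.2]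
  | pred n ih =>
    refine ⟨?_, by simpa using ih.1⟩
    have hun := hu (-n + 1)
    have hvn := hv (-n + 1)
    rw [add_sub_cancel_right, show -(n : ℤ) + 1 - 2 = -n - 1 by ring, ih.1, ih.2] at hun
    rw [add_sub_cancel_right, show -(n : ℤ) + 1 - 2 = -n - 1 by ring] at hvn
    exact add_left_cancel (hun.symm.trans hvn)

theorem fib_eq_fib_sub_one_add_fib_sub_two (n : ℤ) : fib n = fib (n - 1) + fib (n - 2) := by
  have h := fib_add_two (n - 2)
  rwa [sub_add_cancel, show n - 2 + 1 = n - 1 by ring, add_comm] at h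

def lucas (n : ℤ) : ℤ := fib (n - 1) + fib (n + 1)

theorem lucas_eq_lucas_sub_one_add_lucas_sub_two (n : ℤ) :
    lucas n = lucas (n - 1) + lucas (n - 2) := by
  simp only [lucas, fib_eq_fib_sub_one_add_fib_sub_two (n - 1),
    fib_eq_fib_sub_one_add_fib_sub_two (n + 1)]
  ring_nf

theorem fib_two_mul_eq_fib_mul_lucas (k : ℤ) : fib (2 * k) = fib k * lucas k := by
  rw [fib_two_mul, lucas, fib_eq_fib_add_two_sub_fib_add_one (k - 1), sub_add_cancel,
    show k - 1 + 2 = k + 1 by ring]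
  ring

theorem one_le_fib_natCast_add_one (n : ℕ) : 1 ≤ fib ((n : ℤ) + 1) := by
  have h := fib_natCast (n + 1)
  push_cast at h
  rw [h]
  exact_mod_cast Nat.fib_pos.2 n.succ_pos

theorem fib_natCast_add_one_le (n : ℕ) : fib ((n : ℤ) + 1) ≤ fib ((n : ℤ) + 2) := by
  rw [fib_add_two, fib_natCast, le_add_iff_nonneg_left]
  positivity

theorem sq_cassini_eq_one (m : ℤ) :
    (fib (m + 2) ^ 2 - fib (m + 1) * fib (m + 2) - fib (m + 1) ^ 2) ^ 2 = 1 := by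
  have h := fib_succ_mul_fib_pred_sub_fib_sq (m + 2)
  rw [show m + 2 + 1 = m + 1 + 2 by ring, fib_add_two (m + 1), show m + 1 + 1 = m + 2 by ring,
    show m + 2 - 1 = m + 1 by ring] at h
  calc _ = ((-1 : ℤ) ^ (m + 2).natAbs) ^ 2 := by rw [← h]; ring
    _ = 1 := by rw [← pow_mul, pow_mul', neg_one_sq, one_pow]

theorem sum_Icc_neg_one_zpow_mul_of_eq_average {K : Type*} [Field K] (f g : ℕ → K)
    (h : ∀ n, f (n + 1) = (g n + g (n + 1)) / 2) (n : ℕ) :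
    ∑ k ∈ Icc 1 n, (-1 : K) ^ ((k : ℤ) - 1) * f k =
      g 0 / 2 + (-1) ^ ((n : ℤ) - 1) / 2 * g n := by
  induction n with
  | zero =>
    rw [Icc_eq_empty_of_lt one_pos, sum_empty, Nat.cast_zero, zero_sub, zpow_neg_one, inv_neg,
      inv_one]
    ring
  | succ n ih =>
    rw [sum_Icc_succ_top (by omega), ih, h, Nat.cast_add_one, add_sub_cancel_right,
      zpow_sub_one₀ (by norm_num)]
    field_simp
    ring

section CassiniIdentities

variable {K : Type*} [Field K] [LinearOrder K] [IsStrictOrderedRing K]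

/- The per-summand identities for `a = F (m+1)`, `b = F (m+2)`, once every Fibonacci and Lucas
number in them is written in `a` and `b` (`F (m+3) = a + b`, `L (m+3) = a + 3b`,
`F (2m+6) = F (m+3) L (m+3)`, `F (2m+3) = a² + b²`, ...). -/
theorem fib_term_eq_of_cassini (a b : K) (hcas : (b ^ 2 - a * b - a ^ 2) ^ 2 = 1) (ha : 1 ≤ a)
    (hab : a ≤ b) :
    (a + b) ^ 2 * ((a + b) * (a + 3 * b)) / ((a + b) ^ 4 - 1) =
      ((a ^ 2 + b ^ 2) / (a * b) +
        ((a + 2 * b) ^ 2 + (2 * a + 3 * b) ^ 2) / ((a + 2 * b) * (2 * a + 3 * b))) / 2 := by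
  have ha0 : 0 < a := by linarith
  have hb0 : 0 < b := by linarith
  have : a * b ≠ 0 := by positivity
  have : (a + 2 * b) * (2 * a + 3 * b) ≠ 0 := by positivity
  have : (a + b) ^ 4 - 1 ≠ 0 := by nlinarith [sq_nonneg (a + b), sq_nonneg (a + b - 2)]
  field_simp
  linear_combination (-6 * b ^ 4 - 20 * a * b ^ 3 - 24 * a ^ 2 * b ^ 2 - 12 * a ^ 3 * b -
    2 * a ^ 4) * hcas

theorem lucas_term_eq_of_cassini (a b : K) (hcas : (b ^ 2 - a * b - a ^ 2) ^ 2 = 1)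
    (ha : 1 ≤ a) (hab : a ≤ b) :
    (a + 3 * b) ^ 2 * ((a + b) * (a + 3 * b)) / ((a + 3 * b) ^ 4 - 25) =
      ((a ^ 2 + b ^ 2) / ((2 * b - a) * (2 * a + b)) +
        ((a + 2 * b) ^ 2 + (2 * a + 3 * b) ^ 2) / ((3 * a + 4 * b) * (4 * a + 7 * b))) / 2 := by
  have ha0 : 0 < a := by linarith
  have hb0 : 0 < b := by linarith
  have h1 : (2 * b - a) * (2 * a + b) ≠ 0 := mul_ne_zero (by linarith) (by positivity)
  have h2 : (3 * a + 4 * b) * (4 * a + 7 * b) ≠ 0 := by positivity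
  have h3 : (a + 3 * b) ^ 4 - 25 ≠ 0 := by
    nlinarith [sq_nonneg (a + 3 * b), sq_nonneg (a + 3 * b - 4)]
  rw [div_add_div _ _ h1 h2, div_div, div_eq_div_iff h3 (by positivity)]
  linear_combination (-1350 * b ^ 4 - 2700 * a * b ^ 3 - 1800 * a ^ 2 * b ^ 2 - 500 * a ^ 3 * b -
    50 * a ^ 4) * hcas

end CassiniIdentities

theorem fib_term_eq_average (n : ℕ) :
    (fib ((n : ℤ) + 3) : ℚ) ^ 2 * fib (2 * (n : ℤ) + 6) /
        ((fib ((n : ℤ) + 3) : ℚ) ^ 4 - 1) =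
      ((fib (2 * (n : ℤ) + 3) : ℚ) / (fib ((n : ℤ) + 1) * fib ((n : ℤ) + 2)) +
        (fib (2 * (n : ℤ) + 9) : ℚ) / (fib ((n : ℤ) + 4) * fib ((n : ℤ) + 5))) / 2 := by
  set m : ℤ := (n : ℤ)
  have hcas := sq_cassini_eq_one m
  have ha := one_le_fib_natCast_add_one n
  have hab := fib_natCast_add_one_le n
  set a := fib (m + 1)
  set b := fib (m + 2)
  have e3 : fib (m + 3) = a + b := by grind [fib_add_two]
  have e4 : fib (m + 4) = a + 2 * b := by grind [fib_add_two]
  have e5 : fib (m + 5) = 2 * a + 3 * b := by grind [fib_add_two]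
  have l3 : lucas (m + 3) = a + 3 * b := by grind [lucas, fib_add_two]
  rw [show 2 * m + 3 = 2 * (m + 1) + 1 by ring, show 2 * m + 6 = 2 * (m + 3) by ring,
    show 2 * m + 9 = 2 * (m + 4) + 1 by ring, fib_two_mul_add_one, fib_two_mul_add_one,
    fib_two_mul_eq_fib_mul_lucas, show m + 1 + 1 = m + 2 by ring, show m + 4 + 1 = m + 5 by ring,
    e3, e4, e5, l3]
  push_cast
  linear_combination fib_term_eq_of_cassini (a : ℚ) b (by exact_mod_cast hcas)
    (by exact_mod_cast ha) (by exact_mod_cast hab)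

theorem lucas_term_eq_average (n : ℕ) :
    (lucas ((n : ℤ) + 3) : ℚ) ^ 2 * fib (2 * (n : ℤ) + 6) /
        ((lucas ((n : ℤ) + 3) : ℚ) ^ 4 - 25) =
      ((fib (2 * (n : ℤ) + 3) : ℚ) / (lucas ((n : ℤ) + 1) * lucas ((n : ℤ) + 2)) +
        (fib (2 * (n : ℤ) + 9) : ℚ) / (lucas ((n : ℤ) + 4) * lucas ((n : ℤ) + 5))) / 2 := by
  set m : ℤ := (n : ℤ)
  have hcas := sq_cassini_eq_one m
  have ha := one_le_fib_natCast_add_one n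
  have hab := fib_natCast_add_one_le n
  set a := fib (m + 1)
  set b := fib (m + 2)
  have e3 : fib (m + 3) = a + b := by grind [fib_add_two]
  have e4 : fib (m + 4) = a + 2 * b := by grind [fib_add_two]
  have e5 : fib (m + 5) = 2 * a + 3 * b := by grind [fib_add_two]
  have l1 : lucas (m + 1) = 2 * b - a := by grind [lucas, fib_add_two]
  have l2 : lucas (m + 2) = 2 * a + b := by grind [lucas, fib_add_two]
  have l3 : lucas (m + 3) = a + 3 * b := by grind [lucas, fib_add_two]
  have l4 : lucas (m + 4) = 3 * a + 4 * b := by grind [lucas, fib_add_two]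
  have l5 : lucas (m + 5) = 4 * a + 7 * b := by grind [lucas, fib_add_two]
  rw [show 2 * m + 3 = 2 * (m + 1) + 1 by ring, show 2 * m + 6 = 2 * (m + 3) by ring,
    show 2 * m + 9 = 2 * (m + 4) + 1 by ring, fib_two_mul_add_one, fib_two_mul_add_one,
    fib_two_mul_eq_fib_mul_lucas, show m + 1 + 1 = m + 2 by ring, show m + 4 + 1 = m + 5 by ring,
    e3, e4, e5, l1, l2, l3, l4, l5]
  push_cast
  linear_combination lucas_term_eq_of_cassini (a : ℚ) b (by exact_mod_cast hcas)
    (by exact_mod_cast ha) (by exact_mod_cast hab)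

theorem alternating_sum_of_term_eq_average (D : ℤ → ℤ) (c : ℚ)
    (hterm : ∀ n : ℕ,
      (D ((n : ℤ) + 3) : ℚ) ^ 2 * fib (2 * (n : ℤ) + 6) /
          ((D ((n : ℤ) + 3) : ℚ) ^ 4 - c) =
        ((fib (2 * (n : ℤ) + 3) : ℚ) / (D ((n : ℤ) + 1) * D ((n : ℤ) + 2)) +
          (fib (2 * (n : ℤ) + 9) : ℚ) / (D ((n : ℤ) + 4) * D ((n : ℤ) + 5))) / 2)
    (n : ℕ) :
    ∑ k ∈ Icc 1 n,
        (-1 : ℚ) ^ ((k : ℤ) - 1) * (D ((k : ℤ) + 2) : ℚ) ^ 2 *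
          (fib (2 * (k : ℤ) + 4) : ℚ) / ((D ((k : ℤ) + 2) : ℚ) ^ 4 - c) =
      ((fib 3 : ℚ) / (D 1 * D 2) - fib 5 / (D 2 * D 3) + fib 7 / (D 3 * D 4)) / 2 +
        ((-1 : ℚ) ^ ((n : ℤ) - 1) / 2) *
          ((fib (2 * (n : ℤ) + 3) : ℚ) / (D ((n : ℤ) + 1) * D ((n : ℤ) + 2))
            - (fib (2 * (n : ℤ) + 5) : ℚ) / (D ((n : ℤ) + 2) * D ((n : ℤ) + 3))
            + (fib (2 * (n : ℤ) + 7) : ℚ) / (D ((n : ℤ) + 3) * D ((n : ℤ) + 4))) := by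
  set x : ℕ → ℚ := fun m =>
    (fib (2 * (m : ℤ) + 3) : ℚ) / (D ((m : ℤ) + 1) * D ((m : ℤ) + 2)) with hx
  have h := sum_Icc_neg_one_zpow_mul_of_eq_average
    (fun k : ℕ => (D ((k : ℤ) + 2) : ℚ) ^ 2 * fib (2 * (k : ℤ) + 4) /
      ((D ((k : ℤ) + 2) : ℚ) ^ 4 - c))
    (fun m => x m - x (m + 1) + x (m + 2))
    (fun m => by simp only [hx]; push_cast [mul_add, add_assoc]; rw [hterm]; ring) n
  simp only [hx, mul_assoc, mul_div_assoc] at h ⊢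
  push_cast [mul_add, add_assoc] at h
  rw [h]
  ring

/-- two summation identities over the rationals coming from the
Gelin–Cesàro identity. -/
theorem statement12 (F L : ℤ → ℤ)
    (hF0 : F 0 = 0) (hF1 : F 1 = 1) (hF : ∀ n : ℤ, F n = F (n - 1) + F (n - 2))
    (hL0 : L 0 = 2) (hL1 : L 1 = 1) (hL : ∀ n : ℤ, L n = L (n - 1) + L (n - 2))
    (n : ℕ) :
    (∑ k ∈ Finset.Icc 1 n,
        (-1 : ℚ) ^ ((k : ℤ) - 1) * (F ((k : ℤ) + 2) : ℚ) ^ 2 * (F (2 * (k : ℤ) + 4) : ℚ) /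
          ((F ((k : ℤ) + 2) : ℚ) ^ 4 - 1) =
      5 / 6 + ((-1 : ℚ) ^ ((n : ℤ) - 1) / 2) *
        ((F (2 * (n : ℤ) + 3) : ℚ) / ((F ((n : ℤ) + 1) : ℚ) * (F ((n : ℤ) + 2) : ℚ))
          - (F (2 * (n : ℤ) + 5) : ℚ) / ((F ((n : ℤ) + 2) : ℚ) * (F ((n : ℤ) + 3) : ℚ))
          + (F (2 * (n : ℤ) + 7) : ℚ) / ((F ((n : ℤ) + 3) : ℚ) * (F ((n : ℤ) + 4) : ℚ)))) ∧
    (∑ k ∈ Finset.Icc 1 n,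
        (-1 : ℚ) ^ ((k : ℤ) - 1) * (L ((k : ℤ) + 2) : ℚ) ^ 2 * (F (2 * (k : ℤ) + 4) : ℚ) /
          ((L ((k : ℤ) + 2) : ℚ) ^ 4 - 25) =
      5 / 14 + ((-1 : ℚ) ^ ((n : ℤ) - 1) / 2) *
        ((F (2 * (n : ℤ) + 3) : ℚ) / ((L ((n : ℤ) + 1) : ℚ) * (L ((n : ℤ) + 2) : ℚ))
          - (F (2 * (n : ℤ) + 5) : ℚ) / ((L ((n : ℤ) + 2) : ℚ) * (L ((n : ℤ) + 3) : ℚ))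
          + (F (2 * (n : ℤ) + 7) : ℚ) / ((L ((n : ℤ) + 3) : ℚ) * (L ((n : ℤ) + 4) : ℚ)))) := by
  obtain rfl : F = fib := eq_of_fib_recurrence hF fib_eq_fib_sub_one_add_fib_sub_two
    (by rw [hF0]; rfl) (by rw [hF1]; rfl)
  obtain rfl : L = lucas := eq_of_fib_recurrence hL lucas_eq_lucas_sub_one_add_lucas_sub_two
    (by rw [hL0]; rfl) (by rw [hL1]; rfl)
  constructor
  · rw [alternating_sum_of_term_eq_average fib 1 fib_term_eq_average]
    norm_num [show fib 3 = 2 from rfl, show fib 4 = 3 from rfl, show fib 5 = 5 from rfl,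
      show fib 7 = 13 from rfl]
  · rw [alternating_sum_of_term_eq_average lucas 25 lucas_term_eq_average]
    norm_num [show fib 3 = 2 from rfl, show fib 5 = 5 from rfl, show fib 7 = 13 from rfl,
      show lucas 1 = 1 from rfl, show lucas 2 = 3 from rfl, show lucas 3 = 4 from rfl,
      show lucas 4 = 7 from rfl]
end

section
/- Let p > 0 be a real number, and let U, V : ℤ → ℝ be the Lucas sequences of the first and second kind with parameter p: U(0)=0, U(1)=1, V(0)=2, V(1)=p, and U(n)=p·U(n−1)+U(n−2), V(n)=p·V(n−1)+V(n−2) for all n ∈ ℤ. Then for all positive integers n and k: ∑_{j=0}^{n} 2^j·V(k·2^j)/U(k·2^j)² = ((−1)^k·2 + V(k))/U(k)² + 2·(1 − (−1)^k)·V(2k)/U(2k)² − 2^{n+1}/U(k·2^n)². -/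
/-!
Over `ℝ` the polynomial `X ^ 2 - p X - 1` has distinct roots `α, β` with `α β = -1`, and Binet's
formulas `U n = (αⁿ - βⁿ) / (α - β)`, `V n = αⁿ + βⁿ` give the doubling identities
`U (2m) = U m V m` and `V m ^ 2 = V (2m) + 2 (-1)ᵐ`. Together they turn each term into a
difference, `V (2m) / U (2m) ^ 2 = 1 / U m ^ 2 - 2 (-1)ᵐ / U (2m) ^ 2`, so the sum telescopes; the
sign `(-1)ᵐ` is `1` once `m = k 2ʲ` with `j ≥ 1`, and only the first two terms carry `(-1)ᵏ`.
-/

def IsLucasRec {R : Type*} [CommRing R] (p : R) (f : ℤ → R) : Prop :=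
  ∀ n, f n = p * f (n - 1) + f (n - 2)

namespace IsLucasRec

section CommRing

variable {R : Type*} [CommRing R] {p : R} {f g : ℤ → R}

theorem add_two (hf : IsLucasRec p f) (n : ℤ) : f (n + 2) = p * f (n + 1) + f n := by
  simpa [add_sub_assoc] using hf (n + 2)

theorem eq_of_eq_zero_one (hf : IsLucasRec p f) (hg : IsLucasRec p g) (h0 : f 0 = g 0)
    (h1 : f 1 = g 1) : f = g := by
  have key : ∀ n : ℤ, f n = g n ∧ f (n + 1) = g (n + 1) := by
    intro n
    induction n using Int.induction_on with
    | zero => exact ⟨h0, by simpa using h1⟩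
    | succ n ih =>
      refine ⟨ih.2, ?_⟩
      rw [add_assoc, one_add_one_eq_two, hf.add_two, hg.add_two, ih.1, ih.2]
    | pred n ih =>
      refine ⟨?_, by simpa using ih.1⟩
      obtain ⟨ih0, ih1⟩ := ih
      have hf' := hf.add_two (-(n : ℤ) - 1)
      have hg' := hg.add_two (-(n : ℤ) - 1)
      ring_nf at hf' hg' ih0 ih1 ⊢
      linear_combination -hf' + hg' + ih1 - p * ih0
  exact funext fun n => (key n).1

end CommRing

theorem pos {R : Type*} [CommRing R] [LinearOrder R] [IsStrictOrderedRing R] {p : R}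
    {f : ℤ → R} (hf : IsLucasRec p f) (hp : 0 < p) (h0 : f 0 = 0) (h1 : f 1 = 1) {m : ℤ}
    (hm : 0 < m) : 0 < f m := by
  have key : ∀ n : ℕ, 0 ≤ f n ∧ 0 < f (n + 1) := by
    intro n
    induction n with
    | zero => simp [h0, h1]
    | succ n ih =>
      refine ⟨mod_cast ih.2.le, ?_⟩
      push_cast
      rw [add_assoc, one_add_one_eq_two, hf.add_two]
      nlinarith [ih.1, ih.2]
  obtain ⟨n, rfl⟩ : ∃ n : ℕ, m = n + 1 := ⟨(m - 1).toNat, by omega⟩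
  exact (key n).2

theorem zpow {K : Type*} [Field K] {p x : K} (hx : x ^ 2 = p * x + 1) :
    IsLucasRec p (x ^ ·) := by
  have hx0 : x ≠ 0 := by
    rintro rfl
    simp at hx
  intro n
  have h2 : x ^ n = x ^ (n - 2) * x ^ 2 := by
    rw [← zpow_natCast, ← zpow_add₀ hx0]
    norm_num
  have h1 : x ^ (n - 1) = x ^ (n - 2) * x := by
    rw [← zpow_add_one₀ hx0]
    ring_nf
  show x ^ n = p * x ^ (n - 1) + x ^ (n - 2)
  rw [h2, h1]
  linear_combination x ^ (n - 2) * hx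

end IsLucasRec

structure IsLucasPair {R : Type*} [CommRing R] (p : R) (U V : ℤ → R) : Prop where
  rec_U : IsLucasRec p U
  U_zero : U 0 = 0
  U_one : U 1 = 1
  rec_V : IsLucasRec p V
  V_zero : V 0 = 2
  V_one : V 1 = p

theorem exists_add_eq_mul_eq_neg_one (p : ℝ) : ∃ α β : ℝ, α + β = p ∧ α * β = -1 ∧ α ≠ β := by
  have hs : 0 < √(p ^ 2 + 4) := Real.sqrt_pos.2 (by positivity)
  have hs2 : √(p ^ 2 + 4) ^ 2 = p ^ 2 + 4 := Real.sq_sqrt (by positivity)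
  refine ⟨(p + √(p ^ 2 + 4)) / 2, (p - √(p ^ 2 + 4)) / 2, by ring, by linear_combination -hs2 / 4,
    fun h => by linarith⟩

namespace IsLucasPair

theorem binet {K : Type*} [Field K] {α β : K} {U V : ℤ → K} (h : IsLucasPair (α + β) U V)
    (hαβ : α * β = -1) (hne : α ≠ β) (n : ℤ) :
    U n = (α ^ n - β ^ n) / (α - β) ∧ V n = α ^ n + β ^ n := by
  have hα := IsLucasRec.zpow (p := α + β) (x := α) (by linear_combination -hαβ)
  have hβ := IsLucasRec.zpow (p := α + β) (x := β) (by linear_combination -hαβ)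
  have hsub : α - β ≠ 0 := sub_ne_zero.2 hne
  constructor
  · refine congrFun (h.rec_U.eq_of_eq_zero_one (g := fun n => (α ^ n - β ^ n) / (α - β))
      (fun n => ?_) ?_ ?_) n
    · linear_combination (hα n - hβ n) / (α - β)
    · simp [h.U_zero]
    · simp [h.U_one, hsub]
  · refine congrFun (h.rec_V.eq_of_eq_zero_one (g := fun n => α ^ n + β ^ n)
      (fun n => ?_) ?_ ?_) n
    · linear_combination hα n + hβ n
    · norm_num [h.V_zero]
    · simp [h.V_one]

variable {p : ℝ} {U V : ℤ → ℝ}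

theorem U_two_mul (h : IsLucasPair p U V) (n : ℤ) : U (2 * n) = U n * V n := by
  obtain ⟨α, β, rfl, hαβ, hne⟩ := exists_add_eq_mul_eq_neg_one p
  rw [(h.binet hαβ hne _).1, (h.binet hαβ hne _).1, (h.binet hαβ hne _).2, mul_comm 2 n,
    zpow_mul, zpow_mul, zpow_two, zpow_two]
  ring

theorem V_sq (h : IsLucasPair p U V) (n : ℤ) : V n ^ 2 = V (2 * n) + 2 * (-1) ^ n := by
  obtain ⟨α, β, rfl, hαβ, hne⟩ := exists_add_eq_mul_eq_neg_one p
  rw [(h.binet hαβ hne _).2, (h.binet hαβ hne _).2, mul_comm 2 n, zpow_mul, zpow_mul, ← hαβ,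
    mul_zpow, zpow_two, zpow_two]
  ring

theorem V_two_mul_div_U_two_mul_sq (h : IsLucasPair p U V) {n : ℤ} (hn : U (2 * n) ≠ 0) :
    V (2 * n) / U (2 * n) ^ 2 = 1 / U n ^ 2 - 2 * (-1) ^ n / U (2 * n) ^ 2 := by
  rw [h.U_two_mul] at hn ⊢
  have hU : U n ≠ 0 := left_ne_zero_of_mul hn
  have hV : V n ≠ 0 := right_ne_zero_of_mul hn
  field_simp
  linear_combination -h.V_sq n

end IsLucasPair

/-- a Rabinowitz-type summation identity for the Lucas sequences
of the first and second kind with parameter `p > 0`. -/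
theorem statement13 (p : ℝ) (hp : 0 < p)
    (U V : ℤ → ℝ)
    (hU0 : U 0 = 0) (hU1 : U 1 = 1)
    (hU : ∀ n : ℤ, U n = p * U (n - 1) + U (n - 2))
    (hV0 : V 0 = 2) (hV1 : V 1 = p)
    (hV : ∀ n : ℤ, V n = p * V (n - 1) + V (n - 2))
    (n k : ℕ) (hn : 1 ≤ n) (hk : 1 ≤ k) :
    ∑ j ∈ Finset.range (n + 1),
        2 ^ j * V ((k : ℤ) * 2 ^ j) / U ((k : ℤ) * 2 ^ j) ^ 2 =
      ((-1 : ℝ) ^ k * 2 + V (k : ℤ)) / U (k : ℤ) ^ 2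
        + 2 * (1 - (-1 : ℝ) ^ k) * V (2 * (k : ℤ)) / U (2 * (k : ℤ)) ^ 2
        - 2 ^ (n + 1) / U ((k : ℤ) * 2 ^ n) ^ 2 := by
  have h : IsLucasPair p U V := ⟨hU, hU0, hU1, hV, hV0, hV1⟩
  have hstep (m : ℤ) (hm : 0 < m) :
      V (2 * m) / U (2 * m) ^ 2 = 1 / U m ^ 2 - 2 * (-1) ^ m / U (2 * m) ^ 2 :=
    h.V_two_mul_div_U_two_mul_sq (h.rec_U.pos hp hU0 hU1 (by omega)).ne'
  induction n, hn using Nat.le_induction with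
  | base =>
    have hsign : ((-1 : ℝ) ^ k) ^ 2 = 1 := by rw [← pow_mul, mul_comm, pow_mul, neg_one_sq, one_pow]
    have hk' := hstep k (by omega)
    rw [zpow_natCast] at hk'
    rw [Finset.sum_range_succ, Finset.sum_range_one, mul_comm (k : ℤ) (2 ^ 1)]
    simp only [pow_zero, pow_one, mul_one, one_mul, Nat.reduceAdd]
    -- telescoped, the `j = 1` term leaves `2 / U k ^ 2`; it matches the stated form
    -- because `(1 - (-1) ^ k) * (1 + (-1) ^ k) = 0`
    linear_combination (2 * (-1 : ℝ) ^ k) * hk' - 4 / U (2 * k) ^ 2 * hsign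
  | succ n hn ih =>
    have hm : 0 < (k : ℤ) * 2 ^ n := by positivity
    have hsign : (-1 : ℝ) ^ ((k : ℤ) * 2 ^ n) = 1 :=
      ((Int.even_pow.2 ⟨even_two, by omega⟩).mul_left _).neg_one_zpow
    have hm' := hstep _ hm
    rw [hsign] at hm'
    rw [Finset.sum_range_succ, ih, show (k : ℤ) * 2 ^ (n + 1) = 2 * (k * 2 ^ n) by ring]
    linear_combination (2 : ℝ) ^ (n + 1) * hm'
end

section
/- For all integers k, r, s and t: 6·(G(k)·H(r)·M(s)·N(t) + G(k+1)·H(r+1)·M(s+1)·N(t+1) + G(k+2)·H(r+2)·M(s+2)·N(t+2)) = (G(k)·M(s) + G(k+1)·M(s+1) + G(k+2)·M(s+2))·(H(r)·N(t) + H(r+1)·N(t+1) + H(r+2)·N(t+2)) + (G(k)·H(r) + G(k+1)·H(r+1) + G(k+2)·H(r+2))·(M(s)·N(t) + M(s+1)·N(t+1) + M(s+2)·N(t+2)) + (G(k)·N(t) + G(k+1)·N(t+1) + G(k+2)·N(t+2))·(H(r)·M(s) + H(r+1)·M(s+1) + H(r+2)·M(s+2)). -/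
/-- full generalization of Candido's identity to four gibonacci
sequences. -/
theorem statement16 (G H M N : ℤ → ℝ)
    (hG : ∀ n : ℤ, G n = G (n - 1) + G (n - 2))
    (hH : ∀ n : ℤ, H n = H (n - 1) + H (n - 2))
    (hM : ∀ n : ℤ, M n = M (n - 1) + M (n - 2))
    (hN : ∀ n : ℤ, N n = N (n - 1) + N (n - 2))
    (k r s t : ℤ) :
    6 * (G k * H r * M s * N t + G (k + 1) * H (r + 1) * M (s + 1) * N (t + 1)
          + G (k + 2) * H (r + 2) * M (s + 2) * N (t + 2)) =
      (G k * M s + G (k + 1) * M (s + 1) + G (k + 2) * M (s + 2)) *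
        (H r * N t + H (r + 1) * N (t + 1) + H (r + 2) * N (t + 2))
      + (G k * H r + G (k + 1) * H (r + 1) + G (k + 2) * H (r + 2)) *
        (M s * N t + M (s + 1) * N (t + 1) + M (s + 2) * N (t + 2))
      + (G k * N t + G (k + 1) * N (t + 1) + G (k + 2) * N (t + 2)) *
        (H r * M s + H (r + 1) * M (s + 1) + H (r + 2) * M (s + 2)) := by
  have hg := hG (k + 2); have hh := hH (r + 2); have hm := hM (s + 2); have hn := hN (t + 2)
  simp only [show k + 2 - 1 = k + 1 by ring, show k + 2 - 2 = k by ring,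
    show r + 2 - 1 = r + 1 by ring, show r + 2 - 2 = r by ring,
    show s + 2 - 1 = s + 1 by ring, show s + 2 - 2 = s by ring,
    show t + 2 - 1 = t + 1 by ring, show t + 2 - 2 = t by ring] at hg hh hm hn
  rw [hg, hh, hm, hn]; ring
end
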